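/- arXiv:1407.2800 — 11 statements merged into one kernel-verified Lean document; each statement's English description precedes it below -/
import Mathlib

section
/- Let a, b, c be real numbers such that the 3×3 matrix B = [[1,a,b],[a,1,c],[b,c,1]] is positive semidefinite. Let I be an order-connected subset (interval) of [0,∞) and let f : I → ℝ be a strictly decreasing function whose range is all of [−1,1], satisfying f(p+q) = f(p)·f(q) − √(1−f(p)²)·√(1−f(q)²) for all p, q with p, q, p+q ∈ I. Then for any permutation (x,y,z) of (a,b,c) and any p, q, r ∈ I with f(p) = x, f(q) = y, f(r) = z, one has p ≤ q + r. -/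
/-! If `p > q + r`, then `q + r ∈ I` and monotonicity gives `x = f p < f (q + r) = y z - √(1-y²) √(1-z²)`.
But `det B = 1 + 2xyz - x² - y² - z² = (1 - y²)(1 - z²) - (x - yz)² ≥ 0`, so `|x - yz| ≤ √(1-y²) √(1-z²)`:
a contradiction. -/

open Real

theorem Matrix.det_fin_three_of_one_diag (a b c : ℝ) :
    !![1, a, b; a, 1, c; b, c, 1].det = 1 + 2 * (a * b * c) - (a ^ 2 + b ^ 2 + c ^ 2) := by
  rw [Matrix.det_fin_three]
  simp only [Matrix.of_apply, Matrix.cons_val', Matrix.cons_val_zero, Matrix.cons_val_one,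
    Matrix.cons_val_two, Matrix.empty_val', Matrix.cons_val_fin_one, Matrix.head_cons,
    Matrix.tail_cons, Matrix.head_fin_const]
  ring

theorem List.Perm.one_add_two_mul_prod_sub_sum_sq {x y z a b c : ℝ}
    (h : [x, y, z].Perm [a, b, c]) :
    1 + 2 * (x * y * z) - (x ^ 2 + y ^ 2 + z ^ 2) =
      1 + 2 * (a * b * c) - (a ^ 2 + b ^ 2 + c ^ 2) := by
  have hprod : x * y * z = a * b * c := by simpa [mul_assoc] using h.prod_eq
  have hsq : x ^ 2 + y ^ 2 + z ^ 2 = a ^ 2 + b ^ 2 + c ^ 2 := by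
    simpa [add_assoc] using (h.map (· ^ 2)).sum_eq
  rw [hprod, hsq]

theorem mul_sub_sqrt_mul_sqrt_le {x y z : ℝ} (hy : y ∈ Set.Icc (-1) 1) (hz : z ∈ Set.Icc (-1) 1)
    (h : 0 ≤ 1 + 2 * (x * y * z) - (x ^ 2 + y ^ 2 + z ^ 2)) :
    y * z - √(1 - y ^ 2) * √(1 - z ^ 2) ≤ x := by
  have hy2 : 0 ≤ 1 - y ^ 2 := by nlinarith [hy.1, hy.2]
  have hz2 : 0 ≤ 1 - z ^ 2 := by nlinarith [hz.1, hz.2]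
  have hsq : (x - y * z) ^ 2 ≤ (√(1 - y ^ 2) * √(1 - z ^ 2)) ^ 2 := by
    rw [mul_pow, sq_sqrt hy2, sq_sqrt hz2]
    nlinarith
  linarith [(abs_le_of_sq_le_sq' hsq (by positivity)).1]

theorem stmt0 (a b c : ℝ)
    (hB : Matrix.PosSemidef !![1, a, b; a, 1, c; b, c, 1])
    (I : Set ℝ) (hI : I ⊆ Set.Ici 0) (hIconn : I.OrdConnected)
    (f : ℝ → ℝ) (hf : StrictAntiOn f I) (hrange : f '' I = Set.Icc (-1) 1)
    (hfe : ∀ p ∈ I, ∀ q ∈ I, p + q ∈ I →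
      f (p + q) = f p * f q - Real.sqrt (1 - f p ^ 2) * Real.sqrt (1 - f q ^ 2))
    (x y z : ℝ) (hperm : [x, y, z].Perm [a, b, c])
    (p q r : ℝ) (hp : p ∈ I) (hq : q ∈ I) (hr : r ∈ I)
    (hfp : f p = x) (hfq : f q = y) (hfr : f r = z) :
    p ≤ q + r := by
  by_contra! h
  have hqr : q + r ∈ I := hIconn.out hq hp ⟨le_add_of_nonneg_right (hI hr), h.le⟩
  have hlt : f p < f (q + r) := hf hqr hp h
  rw [hfe q hq r hr hqr, hfp, hfq, hfr] at hlt
  have hy : y ∈ Set.Icc (-1) 1 := hrange ▸ hfq ▸ Set.mem_image_of_mem f hq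
  have hz : z ∈ Set.Icc (-1) 1 := hrange ▸ hfr ▸ Set.mem_image_of_mem f hr
  have hdet := hB.det_nonneg
  rw [Matrix.det_fin_three_of_one_diag, ← hperm.one_add_two_mul_prod_sub_sum_sq] at hdet
  exact hlt.not_ge (mul_sub_sqrt_mul_sqrt_le hy hz hdet)
end

section
/- Let V be a complex inner product space and define, for nonzero vectors u, v ∈ V, the angle θ(u,v) = arccos(|⟨u,v⟩|/(‖u‖·‖v‖)). Then for all nonzero vectors u, v, w ∈ V, the triangle inequality θ(u,v) ≤ θ(u,w) + θ(w,v) holds. -/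
/-!
Normalizing reduces the claim to unit vectors. Splitting `u` and `v` into their components along
the unit vector `w` and orthogonal to it gives `⟪u, v⟫ = ⟪u, w⟫⟪w, v⟫ + ⟪u', v'⟫`, so Cauchy–Schwarz
for the orthogonal parts yields `|⟪u, v⟫| ≥ cos α cos β - sin α sin β = cos (α + β)` with
`α = θ(u, w)`, `β = θ(w, v)`; applying the antitone `arccos` gives `θ(u, v) ≤ α + β` whenever
`α + β ≤ π / 2`, and otherwise the bound `θ ≤ π / 2` suffices.
-/

open Real
open scoped InnerProductSpace

namespace Real

theorem arccos_le_arccos_add_arccos {a b c : ℝ} (ha : 0 ≤ a) (hb₁ : -1 ≤ b) (hb₂ : b ≤ 1)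
    (hc₁ : -1 ≤ c) (hc₂ : c ≤ 1) (h : b * c - √(1 - b ^ 2) * √(1 - c ^ 2) ≤ a) :
    arccos a ≤ arccos b + arccos c := by
  rcases le_or_gt (π / 2) (arccos b + arccos c) with hs | hs
  · exact (arccos_le_pi_div_two.2 ha).trans hs
  · have hcos : cos (arccos b + arccos c) = b * c - √(1 - b ^ 2) * √(1 - c ^ 2) := by
      rw [cos_add, cos_arccos hb₁ hb₂, cos_arccos hc₁ hc₂, sin_arccos, sin_arccos]
    calc arccos a ≤ arccos (cos (arccos b + arccos c)) := arccos_le_arccos (hcos ▸ h)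
      _ = arccos b + arccos c :=
        arccos_cos (add_nonneg (arccos_nonneg _) (arccos_nonneg _)) (by linarith [pi_pos])

end Real

section HermitianAngle

variable (𝕜 : Type*) {V : Type*} [RCLike 𝕜] [NormedAddCommGroup V] [InnerProductSpace 𝕜 V]

noncomputable def hermitianAngle (u v : V) : ℝ :=
  arccos (‖⟪u, v⟫_𝕜‖ / (‖u‖ * ‖v‖))

variable {𝕜}

theorem inner_sub_inner_smul_sub_inner_smul {w : V} (hw : ‖w‖ = 1) (u v : V) :
    ⟪u - ⟪w, u⟫_𝕜 • w, v - ⟪w, v⟫_𝕜 • w⟫_𝕜 = ⟪u, v⟫_𝕜 - ⟪u, w⟫_𝕜 * ⟪w, v⟫_𝕜 := by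
  have hww : ⟪w, w⟫_𝕜 = 1 := by simp [inner_self_eq_norm_sq_to_K, hw]
  simp only [inner_sub_left, inner_sub_right, inner_smul_left, inner_smul_right, inner_conj_symm,
    hww]
  ring

theorem norm_sub_inner_smul_sq {w : V} (hw : ‖w‖ = 1) (u : V) :
    ‖u - ⟪w, u⟫_𝕜 • w‖ ^ 2 = ‖u‖ ^ 2 - ‖⟪u, w⟫_𝕜‖ ^ 2 := by
  have h := congrArg RCLike.re (inner_sub_inner_smul_sub_inner_smul (𝕜 := 𝕜) hw u u)
  have hmul : ⟪u, w⟫_𝕜 * ⟪w, u⟫_𝕜 = ((‖⟪u, w⟫_𝕜‖ ^ 2 : ℝ) : 𝕜) := by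
    rw [← inner_conj_symm w u, RCLike.mul_conj, RCLike.ofReal_pow]
  rwa [hmul, map_sub, inner_self_eq_norm_sq, inner_self_eq_norm_sq, RCLike.ofReal_re] at h

theorem norm_inner_mul_norm_inner_le {w : V} (hw : ‖w‖ = 1) (u v : V) :
    ‖⟪u, w⟫_𝕜‖ * ‖⟪w, v⟫_𝕜‖ ≤
      ‖⟪u, v⟫_𝕜‖ + √(‖u‖ ^ 2 - ‖⟪u, w⟫_𝕜‖ ^ 2) * √(‖v‖ ^ 2 - ‖⟪w, v⟫_𝕜‖ ^ 2) := by
  set u' := u - ⟪w, u⟫_𝕜 • w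
  set v' := v - ⟪w, v⟫_𝕜 • w
  have hu' : ‖u'‖ = √(‖u‖ ^ 2 - ‖⟪u, w⟫_𝕜‖ ^ 2) := by
    rw [← norm_sub_inner_smul_sq hw, sqrt_sq (norm_nonneg _)]
  have hv' : ‖v'‖ = √(‖v‖ ^ 2 - ‖⟪w, v⟫_𝕜‖ ^ 2) := by
    rw [norm_inner_symm, ← norm_sub_inner_smul_sq hw, sqrt_sq (norm_nonneg _)]
  calc ‖⟪u, w⟫_𝕜‖ * ‖⟪w, v⟫_𝕜‖ = ‖⟪u, v⟫_𝕜 - ⟪u', v'⟫_𝕜‖ := by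
        rw [inner_sub_inner_smul_sub_inner_smul hw, sub_sub_cancel, norm_mul]
    _ ≤ ‖⟪u, v⟫_𝕜‖ + ‖⟪u', v'⟫_𝕜‖ := norm_sub_le _ _
    _ ≤ ‖⟪u, v⟫_𝕜‖ + ‖u'‖ * ‖v'‖ := by gcongr; exact norm_inner_le_norm u' v'
    _ = _ := by rw [hu', hv']

theorem hermitianAngle_of_norm_eq_one {u v : V} (hu : ‖u‖ = 1) (hv : ‖v‖ = 1) :
    hermitianAngle 𝕜 u v = arccos ‖⟪u, v⟫_𝕜‖ := by
  simp [hermitianAngle, hu, hv]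

theorem hermitianAngle_normalize {u v : V} (hu : u ≠ 0) (hv : v ≠ 0) :
    hermitianAngle 𝕜 ((‖u‖⁻¹ : 𝕜) • u) ((‖v‖⁻¹ : 𝕜) • v) = hermitianAngle 𝕜 u v := by
  rw [hermitianAngle_of_norm_eq_one (norm_smul_inv_norm hu) (norm_smul_inv_norm hv),
    hermitianAngle, inner_smul_left, inner_smul_right, norm_mul, norm_mul, RCLike.norm_conj,
    norm_inv, norm_inv, RCLike.norm_ofReal, RCLike.norm_ofReal, abs_norm, abs_norm]
  field_simp

theorem hermitianAngle_le_add_of_norm_eq_one {u v w : V} (hu : ‖u‖ = 1) (hv : ‖v‖ = 1)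
    (hw : ‖w‖ = 1) :
    hermitianAngle 𝕜 u v ≤ hermitianAngle 𝕜 u w + hermitianAngle 𝕜 w v := by
  have hcos := norm_inner_mul_norm_inner_le (𝕜 := 𝕜) hw u v
  rw [hu, hv, one_pow] at hcos
  have huw : ‖⟪u, w⟫_𝕜‖ ≤ 1 := by simpa [hu, hw] using norm_inner_le_norm (𝕜 := 𝕜) u w
  have hwv : ‖⟪w, v⟫_𝕜‖ ≤ 1 := by simpa [hv, hw] using norm_inner_le_norm (𝕜 := 𝕜) w v
  simp only [hermitianAngle_of_norm_eq_one, hu, hv, hw]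
  exact arccos_le_arccos_add_arccos (norm_nonneg _) (by linarith [norm_nonneg ⟪u, w⟫_𝕜]) huw
    (by linarith [norm_nonneg ⟪w, v⟫_𝕜]) hwv (by linarith)

theorem hermitianAngle_le_add {u v w : V} (hu : u ≠ 0) (hv : v ≠ 0) (hw : w ≠ 0) :
    hermitianAngle 𝕜 u v ≤ hermitianAngle 𝕜 u w + hermitianAngle 𝕜 w v := by
  rw [← hermitianAngle_normalize hu hv, ← hermitianAngle_normalize hu hw,
    ← hermitianAngle_normalize hw hv]
  exact hermitianAngle_le_add_of_norm_eq_one (norm_smul_inv_norm hu) (norm_smul_inv_norm hv)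
    (norm_smul_inv_norm hw)

end HermitianAngle

theorem stmt2 {V : Type*} [NormedAddCommGroup V] [InnerProductSpace ℂ V]
    (u v w : V) (hu : u ≠ 0) (hv : v ≠ 0) (hw : w ≠ 0) :
    Real.arccos (‖(inner ℂ u v : ℂ)‖ / (‖u‖ * ‖v‖)) ≤
      Real.arccos (‖(inner ℂ u w : ℂ)‖ / (‖u‖ * ‖w‖)) +
      Real.arccos (‖(inner ℂ w v : ℂ)‖ / (‖w‖ * ‖v‖)) :=
  hermitianAngle_le_add (𝕜 := ℂ) hu hv hw
end

section
/- Let a, b, c be real numbers with 0 ≤ a, b, c ≤ 1, and set α = arccos a, β = arccos b, γ = arccos c. Then the three inequalities α ≤ β + γ, β ≤ γ + α, and γ ≤ α + β all hold if and only if the 3×3 matrix B = [[1,a,b],[a,1,c],[b,c,1]] is positive semidefinite. -/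
/-!
Write `a = cos α`, `b = cos β`, `c = cos γ`. Then `det B = (cos (β - γ) - a) (a - cos (β + γ))`,
and the two factors have nonnegative sum `2 sin β sin γ`, so `det B ≥ 0` exactly when
`|β - γ| ≤ α ≤ β + γ`, by monotonicity of `cos` on `[0, π]` (here `β + γ ≤ π` as `b, c ≥ 0`).
A unit-diagonal symmetric matrix with off-diagonal entries in `[-1, 1]` is positive semidefinite
exactly when its determinant is nonnegative, by completing squares.
-/

open Real Matrix

theorem det_unitDiag (a b c : ℝ) :
    (!![1, a, b; a, 1, c; b, c, 1] : Matrix (Fin 3) (Fin 3) ℝ).det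
      = 1 + 2 * a * b * c - a ^ 2 - b ^ 2 - c ^ 2 := by
  rw [det_fin_three]
  simp only [of_apply, cons_val', cons_val_zero, cons_val_fin_one, cons_val_one, cons_val,
    mul_one, one_mul]
  ring

theorem dotProduct_mulVec_unitDiag (a b c : ℝ) (x : Fin 3 → ℝ) :
    star x ⬝ᵥ (!![1, a, b; a, 1, c; b, c, 1] *ᵥ x)
      = (x 0 + a * x 1 + b * x 2) ^ 2 + (1 - a ^ 2) * x 1 ^ 2
        + 2 * (c - a * b) * x 1 * x 2 + (1 - b ^ 2) * x 2 ^ 2 := by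
  simp only [dotProduct, Pi.star_apply, star_trivial, mulVec, of_apply, cons_val',
    cons_val_fin_one, Fin.sum_univ_three, cons_val_zero, cons_val_one, cons_val, one_mul]
  ring

theorem posSemidef_unitDiag_iff {a b c : ℝ} (ha : a ^ 2 ≤ 1) (hb : b ^ 2 ≤ 1) :
    PosSemidef !![1, a, b; a, 1, c; b, c, 1] ↔ 0 ≤ 1 + 2 * a * b * c - a ^ 2 - b ^ 2 - c ^ 2 := by
  refine ⟨fun h ↦ det_unitDiag a b c ▸ h.det_nonneg, fun hdet ↦ ?_⟩
  refine posSemidef_iff_dotProduct_mulVec.2 ⟨?_, fun x ↦ ?_⟩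
  · ext i j
    fin_cases i <;> fin_cases j <;> simp
  rw [dotProduct_mulVec_unitDiag]
  -- Completing squares: `(1 - a²) (1 - b²) - (c - a b)²` is the determinant.
  rcases ha.lt_or_eq with ha | ha
  · have completed_square : (1 - a ^ 2) * ((1 - a ^ 2) * x 1 ^ 2 + 2 * (c - a * b) * x 1 * x 2
        + (1 - b ^ 2) * x 2 ^ 2) = ((1 - a ^ 2) * x 1 + (c - a * b) * x 2) ^ 2
          + (1 + 2 * a * b * c - a ^ 2 - b ^ 2 - c ^ 2) * x 2 ^ 2 := by ring
    have : 0 ≤ (1 - a ^ 2) * x 1 ^ 2 + 2 * (c - a * b) * x 1 * x 2 + (1 - b ^ 2) * x 2 ^ 2 :=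
      nonneg_of_mul_nonneg_right (completed_square ▸ add_nonneg (sq_nonneg _) (mul_nonneg hdet (sq_nonneg _)))
        (by linarith)
    nlinarith [sq_nonneg (x 0 + a * x 1 + b * x 2)]
  · have hc : c = a * b := by nlinarith [sq_nonneg (c - a * b)]
    rw [ha, hc]
    nlinarith [sq_nonneg (x 0 + a * x 1 + b * x 2), mul_nonneg (sub_nonneg.2 hb) (sq_nonneg (x 2))]

theorem mul_nonneg_iff_of_add_nonneg {x y : ℝ} (h : 0 ≤ x + y) :
    0 ≤ x * y ↔ 0 ≤ x ∧ 0 ≤ y := by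
  refine ⟨fun hxy ↦ ?_, fun ⟨hx, hy⟩ ↦ mul_nonneg hx hy⟩
  by_contra! hneg
  rcases le_or_gt 0 x with hx | hx
  · nlinarith [hneg hx]
  · nlinarith

theorem one_add_two_mul_cos_sub_eq (α β γ : ℝ) :
    1 + 2 * cos α * cos β * cos γ - cos α ^ 2 - cos β ^ 2 - cos γ ^ 2
      = (cos (β - γ) - cos α) * (cos α - cos (β + γ)) := by
  rw [cos_sub, cos_add]
  linear_combination -(1 - cos β ^ 2) * sin_sq_add_cos_sq γ - sin γ ^ 2 * sin_sq_add_cos_sq β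

theorem cos_le_cos_iff_of_mem_Icc {x y : ℝ} (hx : x ∈ Set.Icc 0 π) (hy : y ∈ Set.Icc 0 π) :
    cos x ≤ cos y ↔ y ≤ x :=
  strictAntiOn_cos.le_iff_ge hx hy

-- Without `β + γ ≤ π` the spherical condition would also need `α + β + γ ≤ 2π`.
theorem triangle_ineqs_iff_cos_det_nonneg {α β γ : ℝ} (hα : α ∈ Set.Icc 0 π)
    (hβ : β ∈ Set.Icc 0 π) (hγ : γ ∈ Set.Icc 0 π) (hβγ : β + γ ≤ π) :
    (α ≤ β + γ ∧ β ≤ γ + α ∧ γ ≤ α + β) ↔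
      0 ≤ 1 + 2 * cos α * cos β * cos γ - cos α ^ 2 - cos β ^ 2 - cos γ ^ 2 := by
  have hsum : 0 ≤ (cos (β - γ) - cos α) + (cos α - cos (β + γ)) := by
    rw [cos_sub, cos_add]
    nlinarith [sin_nonneg_of_mem_Icc hβ, sin_nonneg_of_mem_Icc hγ]
  have hdiff : |β - γ| ∈ Set.Icc 0 π :=
    ⟨abs_nonneg _, abs_sub_le_iff.2 ⟨by linarith [hβ.2, hγ.1], by linarith [hβ.1, hγ.2]⟩⟩
  rw [one_add_two_mul_cos_sub_eq, mul_nonneg_iff_of_add_nonneg hsum, sub_nonneg, sub_nonneg,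
    ← cos_abs (β - γ), cos_le_cos_iff_of_mem_Icc hα hdiff,
    cos_le_cos_iff_of_mem_Icc ⟨by linarith [hβ.1, hγ.1], hβγ⟩ hα, abs_sub_le_iff]
  constructor
  · rintro ⟨h₁, h₂, h₃⟩
    exact ⟨⟨by linarith, by linarith⟩, h₁⟩
  · rintro ⟨⟨h₁, h₂⟩, h₃⟩
    exact ⟨h₃, by linarith, by linarith⟩

theorem stmt3 (a b c : ℝ) (ha : a ∈ Set.Icc (0:ℝ) 1) (hb : b ∈ Set.Icc (0:ℝ) 1)
    (hc : c ∈ Set.Icc (0:ℝ) 1) :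
    (Real.arccos a ≤ Real.arccos b + Real.arccos c ∧
     Real.arccos b ≤ Real.arccos c + Real.arccos a ∧
     Real.arccos c ≤ Real.arccos a + Real.arccos b) ↔
    Matrix.PosSemidef !![1, a, b; a, 1, c; b, c, 1] := by
  have arccos_mem {x : ℝ} : arccos x ∈ Set.Icc 0 π := ⟨arccos_nonneg x, arccos_le_pi x⟩
  have sq_le_one {x : ℝ} (hx : x ∈ Set.Icc (0:ℝ) 1) : x ^ 2 ≤ 1 := by nlinarith [hx.1, hx.2]
  have hβγ : arccos b + arccos c ≤ π := by
    linarith [arccos_le_pi_div_two.2 hb.1, arccos_le_pi_div_two.2 hc.1]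
  rw [posSemidef_unitDiag_iff (sq_le_one ha) (sq_le_one hb),
    triangle_ineqs_iff_cos_det_nonneg arccos_mem arccos_mem arccos_mem hβγ,
    cos_arccos (by linarith [ha.1]) ha.2, cos_arccos (by linarith [hb.1]) hb.2,
    cos_arccos (by linarith [hc.1]) hc.2]
end

section
/- Let H_1, …, H_n be n×n complex matrices such that each G_i = H_iᴴH_i is a density matrix, i.e., tr(H_iᴴH_i) = 1 for every i. Then for all indices i < j < q: | |tr(H_iᴴH_j)| − |tr(H_iᴴH_q)| | ≤ √(1 − |tr(H_jᴴH_q)|²) ≤ √2 · √(1 − |tr(H_jᴴH_q)|), and for every real number k ≥ 2, | |tr(H_iᴴH_j)|^k − |tr(H_iᴴH_q)|^k | ≤ √(1 − |tr(H_jᴴH_q)|^k). -/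
/-!
Flattening matrices into vectors of `EuclideanSpace ℂ (Fin n × Fin n)` turns `tr (Aᴴ B)` into
`⟪A, B⟫`, so the `H i` become unit vectors. Projecting `u` and `w` onto the orthogonal complement
of `v` gives `|⟪u, w⟫| ≤ |⟪u, v⟫| |⟪v, w⟫| + √(1 - |⟪u, v⟫|²) √(1 - |⟪v, w⟫|²)`, which yields
the first bound directly and says that the angles `arccos |⟪u, v⟫|` satisfy the triangle inequality.
For `k ≥ 2` write `x ^ k = (x ^ p) ^ 2` with `p = k / 2 ≥ 1`. By convexity of `t ↦ t ^ p` the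
substitution `x ↦ x ^ p` preserves the triangle inequality for the angles, and for angles
`Y ≤ X + Z` in `[0, π / 2]` one has `cos² X - cos² Y = sin (X + Y) sin (Y - X) ≤ sin Z`.
-/

open Real ComplexOrder Matrix

namespace Real

lemma arccos_le_arccos_add_arccos_s6 {a b c : ℝ} (hb0 : -1 ≤ b) (hb1 : b ≤ 1) (hc0 : -1 ≤ c)
    (hc1 : c ≤ 1) (h : a ≤ b * c + √(1 - b ^ 2) * √(1 - c ^ 2)) :
    arccos b ≤ arccos a + arccos c := by
  rcases le_or_gt (arccos b) (arccos c) with hbc | hcb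
  · linarith [arccos_nonneg a]
  have hcos : cos (arccos b - arccos c) = b * c + √(1 - b ^ 2) * √(1 - c ^ 2) := by
    rw [cos_sub, cos_arccos hb0 hb1, cos_arccos hc0 hc1, sin_arccos, sin_arccos]
  have := arccos_le_arccos (h.trans_eq hcos.symm)
  rw [arccos_cos (by linarith) (by linarith [arccos_le_pi b, arccos_nonneg c])] at this
  linarith

lemma sub_le_sqrt_one_sub_sq {a b c : ℝ} (hb0 : 0 ≤ b) (hc1 : c ≤ 1)
    (h : a ≤ b * c + √(1 - b ^ 2) * √(1 - c ^ 2)) :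
    a - b ≤ √(1 - c ^ 2) := by
  have hs : √(1 - b ^ 2) ≤ 1 := sqrt_le_one.2 (by nlinarith)
  nlinarith [sqrt_nonneg (1 - c ^ 2)]

lemma rpow_add_mul_rpow_sub_one_mul_sub_le {p x y : ℝ} (hp : 1 ≤ p) (hx : 0 < x) (hy : 0 ≤ y) :
    x ^ p + p * x ^ (p - 1) * (y - x) ≤ y ^ p := by
  have hbern := one_add_mul_self_le_rpow_one_add
    (by linarith [div_nonneg hy hx.le] : -1 ≤ y / x - 1) hp
  rw [add_sub_cancel, div_rpow hy hx.le, le_div_iff₀ (rpow_pos_of_pos hx p)] at hbern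
  have hxp : x ^ p = x ^ (p - 1) * x := by rw [← rpow_add_one hx.ne', sub_add_cancel]
  calc x ^ p + p * x ^ (p - 1) * (y - x) = (1 + p * (y / x - 1)) * x ^ p := by
        rw [hxp]; field_simp
    _ ≤ y ^ p := hbern

lemma sqrt_mul_rpow_sub_one_mul_sqrt_le {p u : ℝ} (hp : 1 ≤ p) (hu0 : 0 < u) (hu1 : u ≤ 1) :
    √p * u ^ (p - 1) * √(1 - u ^ 2) ≤ √(1 - (u ^ p) ^ 2) := by
  have htangent := rpow_add_mul_rpow_sub_one_mul_sub_le hp (by positivity : 0 < u ^ 2) zero_le_one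
  rw [one_rpow, ← rpow_pow_comm hu0.le, ← rpow_pow_comm hu0.le] at htangent
  have hu2 : 0 ≤ 1 - u ^ 2 := by nlinarith
  have hterm : 0 ≤ p * (u ^ (p - 1)) ^ 2 * (1 - u ^ 2) := by positivity
  rw [le_sqrt (by positivity) (by linarith), mul_pow, mul_pow, sq_sqrt (by linarith), sq_sqrt hu2]
  linarith

lemma cos_arccos_rpow_add_arccos_rpow_le {p u v : ℝ} (hp : 1 ≤ p) (hu0 : 0 < u) (hu1 : u ≤ 1)
    (hv0 : 0 < v) (hv1 : v ≤ 1) (h : 0 ≤ cos (arccos u + arccos v)) :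
    cos (arccos (u ^ p) + arccos (v ^ p)) ≤ cos (arccos u + arccos v) ^ p := by
  have hp0 : 0 ≤ p := by linarith
  have hup : u ^ p ≤ 1 := rpow_le_one hu0.le hu1 hp0
  have hvp : v ^ p ≤ 1 := rpow_le_one hv0.le hv1 hp0
  simp only [cos_add, sin_arccos] at h ⊢
  rw [cos_arccos (by linarith) hu1, cos_arccos (by linarith) hv1] at h ⊢
  rw [cos_arccos (by linarith [rpow_pos_of_pos hu0 p]) hup,
    cos_arccos (by linarith [rpow_pos_of_pos hv0 p]) hvp]
  have htangent := rpow_add_mul_rpow_sub_one_mul_sub_le hp (mul_pos hu0 hv0) h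
  have hsines := mul_le_mul (sqrt_mul_rpow_sub_one_mul_sqrt_le hp hu0 hu1)
    (sqrt_mul_rpow_sub_one_mul_sqrt_le hp hv0 hv1) (by positivity) (sqrt_nonneg _)
  have hprod : √p * u ^ (p - 1) * √(1 - u ^ 2) * (√p * v ^ (p - 1) * √(1 - v ^ 2)) =
      p * (u * v) ^ (p - 1) * (√(1 - u ^ 2) * √(1 - v ^ 2)) := by
    rw [mul_rpow hu0.le hv0.le]
    linear_combination (u ^ (p - 1) * v ^ (p - 1) * √(1 - u ^ 2) * √(1 - v ^ 2)) *
      mul_self_sqrt hp0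
  rw [mul_rpow hu0.le hv0.le] at htangent
  linarith

lemma arccos_rpow_le_arccos_rpow_add_arccos_rpow {p a b c : ℝ} (hp : 1 ≤ p) (ha0 : 0 ≤ a)
    (ha1 : a ≤ 1) (hb0 : 0 ≤ b) (hb1 : b ≤ 1) (hc0 : 0 ≤ c) (hc1 : c ≤ 1)
    (h : arccos b ≤ arccos a + arccos c) :
    arccos (b ^ p) ≤ arccos (a ^ p) + arccos (c ^ p) := by
  rcases le_or_gt (π / 2) (arccos (a ^ p) + arccos (c ^ p)) with hπ | hπ
  · exact (arccos_le_pi_div_two.2 (rpow_nonneg hb0 p)).trans hπ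
  have hpa : arccos a ≤ arccos (a ^ p) := arccos_le_arccos (rpow_le_self_of_le_one ha0 ha1 hp)
  have hpc : arccos c ≤ arccos (c ^ p) := arccos_le_arccos (rpow_le_self_of_le_one hc0 hc1 hp)
  have hsum : arccos a + arccos c < π / 2 := by linarith
  have ha : 0 < a := arccos_lt_pi_div_two.1 (by linarith [arccos_nonneg c])
  have hc : 0 < c := arccos_lt_pi_div_two.1 (by linarith [arccos_nonneg a])
  have hcos_nonneg : 0 ≤ cos (arccos a + arccos c) :=
    cos_nonneg_of_mem_Icc ⟨by linarith [arccos_nonneg a, arccos_nonneg c, pi_pos], hsum.le⟩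
  have hcos_le : cos (arccos a + arccos c) ≤ b := by
    calc cos (arccos a + arccos c) ≤ cos (arccos b) :=
          cos_le_cos_of_nonneg_of_le_pi (arccos_nonneg b) (by linarith [pi_pos]) h
      _ = b := cos_arccos (by linarith) hb1
  calc arccos (b ^ p)
      ≤ arccos (cos (arccos (a ^ p) + arccos (c ^ p))) := arccos_le_arccos <|
        (cos_arccos_rpow_add_arccos_rpow_le hp ha ha1 hc hc1 hcos_nonneg).trans
          (rpow_le_rpow hcos_nonneg hcos_le (by linarith))
    _ = arccos (a ^ p) + arccos (c ^ p) :=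
        arccos_cos (by linarith [arccos_nonneg (a ^ p), arccos_nonneg (c ^ p)])
          (by linarith [pi_pos])

lemma sq_sub_sq_le_sqrt_one_sub_sq {a b c : ℝ} (ha0 : 0 ≤ a) (ha1 : a ≤ 1) (hb0 : -1 ≤ b)
    (hb1 : b ≤ 1) (hc0 : 0 ≤ c) (h : arccos b ≤ arccos a + arccos c) :
    a ^ 2 - b ^ 2 ≤ √(1 - c ^ 2) := by
  rw [← sin_arccos, ← cos_arccos (by linarith) ha1, ← cos_arccos hb0 hb1]
  have hsin_nonneg : 0 ≤ sin (arccos c) := sin_arccos c ▸ sqrt_nonneg _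
  rcases le_or_gt (arccos a) (arccos b) with hab | hba
  · have hsin_le : sin (arccos b - arccos a) ≤ sin (arccos c) :=
      sin_le_sin_of_le_of_le_pi_div_two (by linarith [pi_pos])
        (arccos_le_pi_div_two.2 hc0) (by linarith)
    have hsin_diff : 0 ≤ sin (arccos b - arccos a) :=
      sin_nonneg_of_nonneg_of_le_pi (by linarith) (by linarith [arccos_le_pi b, arccos_nonneg a])
    calc cos (arccos a) ^ 2 - cos (arccos b) ^ 2
        = sin (arccos a + arccos b) * sin (arccos b - arccos a) := by
          rw [sin_add, sin_sub]
          linear_combination cos (arccos b) ^ 2 * sin_sq_add_cos_sq (arccos a) -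
            cos (arccos a) ^ 2 * sin_sq_add_cos_sq (arccos b)
      _ ≤ sin (arccos b - arccos a) := mul_le_of_le_one_left hsin_diff (sin_le_one _)
      _ ≤ sin (arccos c) := hsin_le
  · have hcos_le : cos (arccos a) ≤ cos (arccos b) :=
      cos_le_cos_of_nonneg_of_le_pi (arccos_nonneg b) (arccos_le_pi a) hba.le
    have hcos_nonneg : 0 ≤ cos (arccos a) := by
      rw [cos_arccos (by linarith) ha1]; exact ha0
    nlinarith

lemma rpow_sub_rpow_le_sqrt_one_sub_rpow {k a b c : ℝ} (hk : 2 ≤ k) (ha0 : 0 ≤ a) (ha1 : a ≤ 1)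
    (hb0 : 0 ≤ b) (hb1 : b ≤ 1) (hc0 : 0 ≤ c) (hc1 : c ≤ 1)
    (h : arccos b ≤ arccos a + arccos c) :
    a ^ k - b ^ k ≤ √(1 - c ^ k) := by
  have hp : 1 ≤ k / 2 := by linarith
  have hsq : ∀ {x : ℝ}, 0 ≤ x → x ^ k = (x ^ (k / 2)) ^ 2 := fun hx ↦ by
    rw [← rpow_natCast, ← rpow_mul hx]; norm_num
  rw [hsq ha0, hsq hb0, hsq hc0]
  exact sq_sub_sq_le_sqrt_one_sub_sq (rpow_nonneg ha0 _) (rpow_le_one ha0 ha1 (by linarith))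
    (by linarith [rpow_nonneg hb0 (k / 2)]) (rpow_le_one hb0 hb1 (by linarith))
    (rpow_nonneg hc0 _) (arccos_rpow_le_arccos_rpow_add_arccos_rpow hp ha0 ha1 hb0 hb1 hc0 hc1 h)

end Real

section InnerProductSpace

variable {𝕜 E : Type*} [RCLike 𝕜] [NormedAddCommGroup E] [InnerProductSpace 𝕜 E]

local notation "⟪" x ", " y "⟫" => inner 𝕜 x y

lemma norm_eq_one_of_inner_self_eq_one {x : E} (hx : ⟪x, x⟫ = 1) : ‖x‖ = 1 := by
  rw [inner_self_eq_norm_sq_to_K] at hx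
  exact (pow_eq_one_iff_of_nonneg (norm_nonneg x) two_ne_zero).1 (mod_cast hx)

lemma norm_sub_inner_smul_sq_s6 {x y : E} (hy : ‖y‖ = 1) :
    ‖x - ⟪y, x⟫ • y‖ ^ 2 = ‖x‖ ^ 2 - ‖⟪y, x⟫‖ ^ 2 := by
  rw [@norm_sub_sq 𝕜, inner_smul_right, ← inner_conj_symm x y, RCLike.mul_conj, norm_smul, hy,
    ← RCLike.ofReal_pow, RCLike.ofReal_re]
  ring

lemma norm_inner_le_mul_add_sqrt_mul_sqrt {u v w : E} (hu : ‖u‖ = 1) (hv : ‖v‖ = 1)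
    (hw : ‖w‖ = 1) :
    ‖⟪u, w⟫‖ ≤ ‖⟪u, v⟫‖ * ‖⟪v, w⟫‖ + √(1 - ‖⟪u, v⟫‖ ^ 2) * √(1 - ‖⟪v, w⟫‖ ^ 2) := by
  have hdecomp : ⟪u, w⟫ = ⟪u, v⟫ * ⟪v, w⟫ + ⟪u - ⟪v, u⟫ • v, w - ⟪v, w⟫ • v⟫ := by
    simp only [inner_sub_left, inner_sub_right, inner_smul_left, inner_smul_right,
      inner_self_eq_one_of_norm_eq_one hv, inner_conj_symm]
    ring
  have hu' : ‖u - ⟪v, u⟫ • v‖ = √(1 - ‖⟪u, v⟫‖ ^ 2) := by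
    rw [← sqrt_sq (norm_nonneg _), norm_sub_inner_smul_sq_s6 hv, hu, one_pow, norm_inner_symm]
  have hw' : ‖w - ⟪v, w⟫ • v‖ = √(1 - ‖⟪v, w⟫‖ ^ 2) := by
    rw [← sqrt_sq (norm_nonneg _), norm_sub_inner_smul_sq_s6 hv, hw, one_pow]
  calc ‖⟪u, w⟫‖ ≤ ‖⟪u, v⟫ * ⟪v, w⟫‖ + ‖⟪u - ⟪v, u⟫ • v, w - ⟪v, w⟫ • v⟫‖ :=
        hdecomp ▸ norm_add_le _ _
    _ ≤ ‖⟪u, v⟫‖ * ‖⟪v, w⟫‖ + √(1 - ‖⟪u, v⟫‖ ^ 2) * √(1 - ‖⟪v, w⟫‖ ^ 2) := by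
        rw [norm_mul, ← hu', ← hw']
        gcongr
        exact norm_inner_le_norm _ _

end InnerProductSpace

lemma Matrix.inner_toLp_uncurry {m n 𝕜 : Type*} [Fintype m] [Fintype n] [RCLike 𝕜]
    (A B : Matrix m n 𝕜) :
    inner 𝕜 (WithLp.toLp 2 (Function.uncurry A) : EuclideanSpace 𝕜 (m × n))
      (WithLp.toLp 2 (Function.uncurry B)) = (Aᴴ * B).trace := by
  simp only [PiLp.inner_apply, RCLike.inner_apply, trace, diag, mul_apply, conjTranspose_apply,
    Fintype.sum_prod_type, RCLike.star_def, mul_comm]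
  exact Finset.sum_comm

theorem stmt6_general {n : ℕ} (H : Fin n → Matrix (Fin n) (Fin n) ℂ)
    (hdensity : ∀ i, ((H i)ᴴ * H i).trace = 1)
    (i j q : Fin n) :
    (|‖((H i)ᴴ * H j).trace‖ - ‖((H i)ᴴ * H q).trace‖| ≤
        Real.sqrt (1 - ‖((H j)ᴴ * H q).trace‖ ^ 2) ∧
      Real.sqrt (1 - ‖((H j)ᴴ * H q).trace‖ ^ 2) ≤
        Real.sqrt 2 * Real.sqrt (1 - ‖((H j)ᴴ * H q).trace‖)) ∧
    ∀ k : ℝ, 2 ≤ k →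
      |‖((H i)ᴴ * H j).trace‖ ^ k - ‖((H i)ᴴ * H q).trace‖ ^ k| ≤
        Real.sqrt (1 - ‖((H j)ᴴ * H q).trace‖ ^ k) := by
  let v (m : Fin n) : EuclideanSpace ℂ (Fin n × Fin n) := WithLp.toLp 2 (Function.uncurry (H m))
  have hinner (m l : Fin n) : ((H m)ᴴ * H l).trace = inner ℂ (v m) (v l) :=
    (Matrix.inner_toLp_uncurry _ _).symm
  have hv (m : Fin n) : ‖v m‖ = 1 := norm_eq_one_of_inner_self_eq_one (hinner m m ▸ hdensity m)
  have hle (m l : Fin n) : ‖inner ℂ (v m) (v l)‖ ≤ 1 := by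
    simpa [hv] using norm_inner_le_norm (𝕜 := ℂ) (v m) (v l)
  have hA := norm_inner_le_mul_add_sqrt_mul_sqrt (𝕜 := ℂ) (hv i) (hv q) (hv j)
  have hB := norm_inner_le_mul_add_sqrt_mul_sqrt (𝕜 := ℂ) (hv i) (hv j) (hv q)
  rw [norm_inner_symm (v q)] at hA
  simp only [hinner]
  set a := ‖inner ℂ (v i) (v j)‖
  set b := ‖inner ℂ (v i) (v q)‖
  set c := ‖inner ℂ (v j) (v q)‖
  have ha : 0 ≤ a := norm_nonneg _
  have hb : 0 ≤ b := norm_nonneg _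
  have hc : 0 ≤ c := norm_nonneg _
  have hba := arccos_le_arccos_add_arccos_s6 (by linarith) (hle i q) (by linarith) (hle j q) hA
  have hab := arccos_le_arccos_add_arccos_s6 (by linarith) (hle i j) (by linarith) (hle j q) hB
  refine ⟨⟨abs_sub_le_iff.2 ⟨sub_le_sqrt_one_sub_sq hb (hle j q) hA,
      sub_le_sqrt_one_sub_sq ha (hle j q) hB⟩, ?_⟩,
    fun k hk ↦ abs_sub_le_iff.2 ⟨?_, ?_⟩⟩
  · rw [← sqrt_mul zero_le_two]
    exact sqrt_le_sqrt (by nlinarith [sq_nonneg (1 - c)])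
  · exact rpow_sub_rpow_le_sqrt_one_sub_rpow hk ha (hle i j) hb (hle i q) hc (hle j q) hba
  · exact rpow_sub_rpow_le_sqrt_one_sub_rpow hk hb (hle i q) ha (hle i j) hc (hle j q) hab

theorem stmt6 {n : ℕ} (H : Fin n → Matrix (Fin n) (Fin n) ℂ)
    (hdensity : ∀ i, ((H i)ᴴ * H i).trace = 1)
    (i j q : Fin n) (hij : i < j) (hjq : j < q) :
    (|‖((H i)ᴴ * H j).trace‖ - ‖((H i)ᴴ * H q).trace‖| ≤
        Real.sqrt (1 - ‖((H j)ᴴ * H q).trace‖ ^ 2) ∧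
      Real.sqrt (1 - ‖((H j)ᴴ * H q).trace‖ ^ 2) ≤
        Real.sqrt 2 * Real.sqrt (1 - ‖((H j)ᴴ * H q).trace‖)) ∧
    ∀ k : ℝ, 2 ≤ k →
      |‖((H i)ᴴ * H j).trace‖ ^ k - ‖((H i)ᴴ * H q).trace‖ ^ k| ≤
        Real.sqrt (1 - ‖((H j)ᴴ * H q).trace‖ ^ k) :=
  stmt6_general H hdensity i j q
end

section
/- Let a, b, c be real numbers such that the 3×3 matrix B = [[1,a,b],[a,1,c],[b,c,1]] is positive semidefinite. Set c₋ = ab − √((1−a²)(1−b²)), c₊ = ab + √((1−a²)(1−b²)), Δ = max{√(1−c₋²), √(1−c₊²)}, and δ = min{√(1−c₋²), √(1−c₊²)}. If f is a real-valued function on the interval [c₋, c₊] with δ ≤ f(x) for all x ∈ [c₋, c₊], then |a² − b²| ≤ Δ·f(x) for all x ∈ [c₋, c₊]. In particular, |a² − b²| ≤ Δ·√(1 − c²). -/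
/-!
Positive semidefiniteness of `B` gives `a², b² ≤ 1` and `det B ≥ 0`; as a quadratic in `c`,
`det B = (1 - a²)(1 - b²) - (c - ab)²`, whose roots are `c₋` and `c₊`, so `c ∈ [c₋, c₊]`.
The endpoints satisfy `(1 - c₋²)(1 - c₊²) = (a² - b²)²`, hence `Δ δ = |a² - b²|` and the
first claim is `Δ δ ≤ Δ f x`. The second is the first with `f x = √(1 - x²)`: as `1 - x²` is
concave, its minimum over `[c₋, c₊]` is attained at an endpoint, so `δ ≤ √(1 - x²)` there.
-/

open Real Set

lemma Matrix.PosSemidef.correlation_bounds {a b c : ℝ}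
    (hB : Matrix.PosSemidef !![1, a, b; a, 1, c; b, c, 1]) :
    a ^ 2 ≤ 1 ∧ b ^ 2 ≤ 1 ∧ (c - a * b) ^ 2 ≤ (1 - a ^ 2) * (1 - b ^ 2) := by
  have h₁ : a * a ≤ 1 := by
    have h := (hB.submatrix ![0, 1]).det_nonneg
    rw [Matrix.det_fin_two] at h
    simpa using h
  have h₂ : b * b ≤ 1 := by
    have h := (hB.submatrix ![0, 2]).det_nonneg
    rw [Matrix.det_fin_two] at h
    simpa using h
  have h₃ : b * b ≤ 1 - c * c - a * a + a * c * b + b * a * c := by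
    have h := hB.det_nonneg
    rw [Matrix.det_fin_three] at h
    simpa using h
  exact ⟨by rwa [sq], by rwa [sq], by linear_combination h₃⟩

lemma one_sub_sq_mul_one_sub_sq_of_sq_eq {a b s : ℝ} (hs : s ^ 2 = (1 - a ^ 2) * (1 - b ^ 2)) :
    (1 - (a * b - s) ^ 2) * (1 - (a * b + s) ^ 2) = (a ^ 2 - b ^ 2) ^ 2 := by
  linear_combination (s ^ 2 + (1 - a ^ 2) * (1 - b ^ 2) - 2 - 2 * (a * b) ^ 2) * hs

lemma sq_mul_sub_le_one {a b s : ℝ} (ha : a ^ 2 ≤ 1) (hb : b ^ 2 ≤ 1) (hs0 : 0 ≤ s)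
    (hs : s ^ 2 = (1 - a ^ 2) * (1 - b ^ 2)) : (a * b - s) ^ 2 ≤ 1 := by
  have hs1 : s ≤ 1 + a * b := by nlinarith [sq_nonneg (a + b), sq_nonneg (a - b)]
  nlinarith [sq_nonneg (a - b)]

lemma min_one_sub_sq_le {p q x : ℝ} (hx : x ∈ Icc p q) :
    min (1 - p ^ 2) (1 - q ^ 2) ≤ 1 - x ^ 2 := by
  rcases le_or_gt 0 (x + q) with h | h
  · exact min_le_of_right_le (by nlinarith [mul_nonneg (sub_nonneg.2 hx.2) h])
  · have hxp : 0 ≤ -(x + p) := by linarith [hx.1, hx.2]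
    exact min_le_of_left_le (by nlinarith [mul_nonneg (sub_nonneg.2 hx.1) hxp])

lemma min_sqrt_one_sub_sq_le {p q x : ℝ} (hx : x ∈ Icc p q) :
    min √(1 - p ^ 2) √(1 - q ^ 2) ≤ √(1 - x ^ 2) := by
  rw [← Real.sqrt_monotone.map_min]
  exact Real.sqrt_le_sqrt (min_one_sub_sq_le hx)

theorem stmt8 (a b c : ℝ)
    (hB : Matrix.PosSemidef !![1, a, b; a, 1, c; b, c, 1])
    (cm cp Δ δ : ℝ)
    (hcm : cm = a * b - Real.sqrt ((1 - a ^ 2) * (1 - b ^ 2)))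
    (hcp : cp = a * b + Real.sqrt ((1 - a ^ 2) * (1 - b ^ 2)))
    (hΔ : Δ = max (Real.sqrt (1 - cm ^ 2)) (Real.sqrt (1 - cp ^ 2)))
    (hδ : δ = min (Real.sqrt (1 - cm ^ 2)) (Real.sqrt (1 - cp ^ 2)))
    (f : ℝ → ℝ) (hf : ∀ x ∈ Set.Icc cm cp, δ ≤ f x) :
    (∀ x ∈ Set.Icc cm cp, |a ^ 2 - b ^ 2| ≤ Δ * f x) ∧
      |a ^ 2 - b ^ 2| ≤ Δ * Real.sqrt (1 - c ^ 2) := by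
  obtain ⟨ha, hb, hc⟩ := hB.correlation_bounds
  set s := √((1 - a ^ 2) * (1 - b ^ 2))
  have hs0 : 0 ≤ s := Real.sqrt_nonneg _
  have hs : s ^ 2 = (1 - a ^ 2) * (1 - b ^ 2) :=
    Real.sq_sqrt (mul_nonneg (sub_nonneg.2 ha) (sub_nonneg.2 hb))
  have hΔδ : Δ * δ = |a ^ 2 - b ^ 2| := by
    rw [hΔ, hδ, max_mul_min, ← Real.sqrt_mul (sub_nonneg.2 (hcm ▸ sq_mul_sub_le_one ha hb hs0 hs)),
      hcm, hcp, one_sub_sq_mul_one_sub_sq_of_sq_eq hs, Real.sqrt_sq_eq_abs]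
  have hΔ0 : 0 ≤ Δ := hΔ ▸ le_max_of_le_left (Real.sqrt_nonneg _)
  have bound (g : ℝ → ℝ) (hg : ∀ x ∈ Icc cm cp, δ ≤ g x) (x : ℝ) (hx : x ∈ Icc cm cp) :
      |a ^ 2 - b ^ 2| ≤ Δ * g x :=
    hΔδ ▸ mul_le_mul_of_nonneg_left (hg x hx) hΔ0
  have hcI : c ∈ Icc cm cp := by
    obtain ⟨h₁, h₂⟩ := abs_le_of_sq_le_sq' (hs ▸ hc) hs0
    constructor <;> linarith
  exact ⟨bound f hf, bound (fun x ↦ √(1 - x ^ 2)) (fun _ hx ↦ hδ ▸ min_sqrt_one_sub_sq_le hx) c hcI⟩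
end

section
/- Let a, b, c be real numbers such that the 3×3 matrix B = [[1,a,b],[a,1,c],[b,c,1]] is positive semidefinite. Then | |a| − |b| | ≤ √(1 − |c|²) ≤ √2 · √(1 − |c|), and for every real number k ≥ 2, | |a|^k − |b|^k | ≤ √(1 − |c|^k). -/
/-!
Write `x = |a|`, `y = |b|`, `z = |c|`. Positive semidefiniteness of `B` gives
`(z - x y)² ≤ (1 - x²)(1 - y²)`, i.e. `z ≤ cos (α - β)` where `x = cos α`, `y = cos β` with
`α, β ∈ [0, π/2]`, so it suffices to bound `|cos^k α - cos^k β|` by `√(1 - cos^k (α - β))`.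

For `n` points in the closed first quadrant and a real `m ≥ n - 2`, the matrix `(⟨pᵢ, pⱼ⟩ ^ m)` is
positive semidefinite. Rotate the point of least angle onto the first axis and scale all second
coordinates by `√u`: the quadratic form is then increasing in `u ∈ [0, 1]`, since its derivative
is `m` times the analogous form with exponent `m - 1` on the other `n - 1` points, and at `u = 0`
it is a square. Applied to the four unit vectors `(1, 0)`, `(cos α, sin α)`, `(cos β, sin β)` and
either `(0, 1)` or `(cos (α + β), sin (α + β))`, this yields the bound; in the first case one also
needs that `t ^ (k/2) + (1 - t) ^ (k/2)` decreases on `[0, 1/2]`.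
-/

open Real Finset

section PowGramForm

variable {ι : Type*}

/-- The quadratic form, evaluated at `w`, of the `m`-th entrywise power of the Gram matrix of the
planar points `(c i, s i)`, `i ∈ S`. -/
noncomputable def powGramForm (S : Finset ι) (c s w : ι → ℝ) (m : ℝ) : ℝ :=
  ∑ i ∈ S, ∑ j ∈ S, w i * w j * (c i * c j + s i * s j) ^ m

theorem powGramForm_congr {S : Finset ι} {c s c' s' : ι → ℝ}
    (h : ∀ i j, c' i * c' j + s' i * s' j = c i * c j + s i * s j) (w : ι → ℝ) (m : ℝ) :
    powGramForm S c' s' w m = powGramForm S c s w m := by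
  simp only [powGramForm, h]

theorem powGramForm_erase [DecidableEq ι] {S : Finset ι} {c s w : ι → ℝ} {m : ℝ} {i₀ : ι}
    (h : ∀ j ∈ S, w i₀ * w j * (c i₀ * c j + s i₀ * s j) ^ m = 0) :
    powGramForm (S.erase i₀) c s w m = powGramForm S c s w m := by
  have hsymm : ∀ i j, w j * w i * (c j * c i + s j * s i) ^ m
      = w i * w j * (c i * c j + s i * s j) ^ m := fun i j => by ring_nf
  unfold powGramForm
  by_cases hi₀ : i₀ ∈ S
  · rw [← sum_erase S (sum_eq_zero h)]
    refine sum_congr rfl fun i hi => sum_erase S ?_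
    rw [hsymm]
    exact h i (mem_of_mem_erase hi)
  · rw [erase_eq_of_notMem hi₀]

theorem rpow_two_point_nonneg {A B C m : ℝ} (hm : 0 ≤ m) (hA : 0 ≤ A) (hB : 0 ≤ B)
    (hC : 0 ≤ C) (hCAB : C ^ 2 ≤ A * B) (v w : ℝ) :
    0 ≤ v * v * A ^ m + w * w * B ^ m + 2 * (v * w) * C ^ m := by
  set p := A ^ (m / 2)
  set q := B ^ (m / 2)
  have hp : A ^ m = p ^ 2 := by rw [← rpow_mul_natCast hA]; ring_nf
  have hq : B ^ m = q ^ 2 := by rw [← rpow_mul_natCast hB]; ring_nf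
  have hCpq : C ^ m ≤ p * q := by
    calc C ^ m = (C ^ 2) ^ (m / 2) := by rw [← rpow_natCast_mul hC]; ring_nf
      _ ≤ (A * B) ^ (m / 2) := by gcongr
      _ = p * q := mul_rpow hA hB
  have hC0 : 0 ≤ C ^ m := rpow_nonneg hC m
  rw [hp, hq]
  rcases le_total 0 (v * w) with hvw | hvw
  · nlinarith [mul_nonneg hvw hC0]
  · nlinarith [sq_nonneg (v * p + w * q), mul_le_mul_of_nonpos_left hCpq hvw]

theorem powGramForm_nonneg_of_card_le_two {S : Finset ι} {c s : ι → ℝ} {m : ℝ} (hm : 0 ≤ m)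
    (hS : S.card ≤ 2) (hc : ∀ i ∈ S, 0 ≤ c i) (hs : ∀ i ∈ S, 0 ≤ s i) (w : ι → ℝ) :
    0 ≤ powGramForm S c s w m := by
  classical
  interval_cases hcard : S.card
  · simp [card_eq_zero.1 hcard, powGramForm]
  · obtain ⟨i, rfl⟩ := card_eq_one.1 hcard
    simp only [powGramForm, sum_singleton]
    exact mul_nonneg (mul_self_nonneg _)
      (rpow_nonneg (add_nonneg (mul_self_nonneg _) (mul_self_nonneg _)) m)
  · obtain ⟨i, j, hij, rfl⟩ := card_eq_two.1 hcard
    have hci := hc i (by simp)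
    have hsi := hs i (by simp)
    have hcj := hc j (by simp)
    have hsj := hs j (by simp)
    have key := rpow_two_point_nonneg hm
      (add_nonneg (mul_self_nonneg (c i)) (mul_self_nonneg (s i)))
      (add_nonneg (mul_self_nonneg (c j)) (mul_self_nonneg (s j))) (by positivity)
      (by nlinarith [sq_nonneg (c i * s j - s i * c j)] :
        (c i * c j + s i * s j) ^ 2 ≤ (c i * c i + s i * s i) * (c j * c j + s j * s j))
      (w i) (w j)
    simp only [powGramForm, sum_pair hij]
    rw [mul_comm (c j), mul_comm (s j)]
    linarith

theorem powGramForm_nonneg_of_deriv {S : Finset ι} {c s w : ι → ℝ} {m : ℝ} (hm : 1 ≤ m)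
    (hc : ∀ i ∈ S, 0 ≤ c i)
    (h : ∀ u ∈ Set.Icc (0 : ℝ) 1,
      0 ≤ powGramForm S c (fun i => √u * s i) (fun i => w i * s i) (m - 1)) :
    0 ≤ powGramForm S c s w m := by
  set F : ℝ → ℝ := fun u => ∑ i ∈ S, ∑ j ∈ S, w i * w j * (c i * c j + u * (s i * s j)) ^ m
  set F' : ℝ → ℝ := fun u =>
    m * ∑ i ∈ S, ∑ j ∈ S, w i * s i * (w j * s j) * (c i * c j + u * (s i * s j)) ^ (m - 1)
  have hF : ∀ u, HasDerivAt F (F' u) u := by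
    intro u
    have := HasDerivAt.fun_sum fun i (_ : i ∈ S) => HasDerivAt.fun_sum fun j (_ : j ∈ S) =>
      (((hasDerivAt_id u).mul_const (s i * s j)).const_add (c i * c j)).rpow_const
        (Or.inr hm) |>.const_mul (w i * w j)
    refine this.congr_deriv ?_
    simp only [F', mul_sum, id]
    exact sum_congr rfl fun i _ => sum_congr rfl fun j _ => by ring
  have hF' : ∀ u ∈ Set.Icc (0 : ℝ) 1, 0 ≤ F' u := by
    intro u hu
    have hsq : √u * √u = u := mul_self_sqrt hu.1
    refine mul_nonneg (by linarith) (le_of_le_of_eq (h u hu) ?_)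
    refine sum_congr rfl fun i _ => sum_congr rfl fun j _ => ?_
    dsimp only
    rw [mul_mul_mul_comm (√u), hsq, mul_mul_mul_comm (w i)]
  have hmono : MonotoneOn F (Set.Icc 0 1) :=
    monotoneOn_of_hasDerivWithinAt_nonneg (convex_Icc 0 1)
      (fun u _ => (hF u).continuousAt.continuousWithinAt)
      (fun u _ => (hF u).hasDerivWithinAt)
      (fun u hu => hF' u (interior_subset hu))
  have hF0 : F 0 = (∑ i ∈ S, w i * c i ^ m) ^ 2 := by
    simp only [F, sq, sum_mul_sum, zero_mul, add_zero]
    refine sum_congr rfl fun i hi => sum_congr rfl fun j hj => ?_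
    rw [mul_rpow (hc i hi) (hc j hj)]
    ring
  have hF1 : F 1 = powGramForm S c s w m := by simp only [F, one_mul, powGramForm]
  calc 0 ≤ F 0 := hF0 ▸ sq_nonneg _
    _ ≤ F 1 := hmono (Set.left_mem_Icc.2 zero_le_one) (Set.right_mem_Icc.2 zero_le_one)
      zero_le_one
    _ = powGramForm S c s w m := hF1

theorem exists_min_angle {S : Finset ι} {c s : ι → ℝ} (hS : S.Nonempty)
    (hpos : ∀ i ∈ S, 0 < c i + s i) :
    ∃ i₀ ∈ S, ∀ j ∈ S, s i₀ * c j ≤ c i₀ * s j := by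
  obtain ⟨i₀, hi₀, hmin⟩ := S.exists_min_image (fun i => s i / (c i + s i)) hS
  refine ⟨i₀, hi₀, fun j hj => ?_⟩
  have := hmin j hj
  rw [div_le_div_iff₀ (hpos i₀ hi₀) (hpos j hj)] at this
  linarith

theorem exists_rotation {S : Finset ι} {c s : ι → ℝ} {i₀ : ι} (hi₀ : i₀ ∈ S)
    (hc : ∀ i ∈ S, 0 ≤ c i) (hs : ∀ i ∈ S, 0 ≤ s i) (hpos : 0 < c i₀ + s i₀)
    (hmin : ∀ j ∈ S, s i₀ * c j ≤ c i₀ * s j) :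
    ∃ c' s' : ι → ℝ, (∀ i ∈ S, 0 ≤ c' i) ∧ (∀ i ∈ S, 0 ≤ s' i) ∧ s' i₀ = 0 ∧
      ∀ i j, c' i * c' j + s' i * s' j = c i * c j + s i * s j := by
  set d := √(c i₀ ^ 2 + s i₀ ^ 2)
  have hd : 0 < d := sqrt_pos.2 (by nlinarith [sq_nonneg (c i₀ - s i₀)])
  have hd2 : d ^ 2 = c i₀ ^ 2 + s i₀ ^ 2 := sq_sqrt (by positivity)
  refine ⟨fun i => (c i₀ * c i + s i₀ * s i) / d, fun i => (c i₀ * s i - s i₀ * c i) / d,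
    fun i hi => ?_, fun i hi => ?_, by simp [mul_comm], fun i j => ?_⟩
  · have := hc i₀ hi₀
    have := hs i₀ hi₀
    have := hc i hi
    have := hs i hi
    positivity
  · exact div_nonneg (by linarith [hmin i hi]) hd.le
  · field_simp
    linear_combination -(c i * c j + s i * s j) * hd2

theorem powGramForm_nonneg (n : ℕ) {m : ℝ} (hm : (n : ℝ) ≤ m) {S : Finset ι}
    (hS : S.card ≤ n + 2) {c s : ι → ℝ} (hc : ∀ i ∈ S, 0 ≤ c i) (hs : ∀ i ∈ S, 0 ≤ s i)
    (w : ι → ℝ) : 0 ≤ powGramForm S c s w m := by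
  classical
  induction n generalizing m S c s w with
  | zero => exact powGramForm_nonneg_of_card_le_two (by simpa using hm) hS hc hs w
  | succ n ih =>
    push_cast at hm
    have hm1 : 1 ≤ m := by linarith [n.cast_nonneg (α := ℝ)]
    have hcard : ∀ i₀ ∈ S, (S.erase i₀).card ≤ n + 2 := fun i₀ hi₀ => by
      rw [card_erase_of_mem hi₀]
      omega
    by_cases hzero : ∃ i₀ ∈ S, c i₀ + s i₀ = 0
    · obtain ⟨i₀, hi₀, h0⟩ := hzero
      have hc₀ : c i₀ = 0 := by linarith [hc i₀ hi₀, hs i₀ hi₀]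
      have hs₀ : s i₀ = 0 := by linarith [hc i₀ hi₀, hs i₀ hi₀]
      rw [← powGramForm_erase (i₀ := i₀) fun j _ => by
        simp [hc₀, hs₀, zero_rpow (by linarith : m ≠ 0)]]
      exact ih (by linarith) (hcard i₀ hi₀) (fun i hi => hc i (mem_of_mem_erase hi))
        (fun i hi => hs i (mem_of_mem_erase hi)) w
    push Not at hzero
    have hpos : ∀ i ∈ S, 0 < c i + s i := fun i hi =>
      lt_of_le_of_ne (add_nonneg (hc i hi) (hs i hi)) (hzero i hi).symm
    obtain rfl | hne := S.eq_empty_or_nonempty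
    · simp [powGramForm]
    obtain ⟨i₀, hi₀, hmin⟩ := exists_min_angle hne hpos
    obtain ⟨c', s', hc', hs', hs'₀, hcs'⟩ :=
      exists_rotation hi₀ hc hs (hpos i₀ hi₀) hmin
    rw [← powGramForm_congr hcs']
    refine powGramForm_nonneg_of_deriv hm1 hc' fun u hu => ?_
    rw [← powGramForm_erase (i₀ := i₀) fun j _ => by simp [hs'₀]]
    exact ih (by linarith) (hcard i₀ hi₀) (fun i hi => hc' i (mem_of_mem_erase hi))
      (fun i hi => mul_nonneg (sqrt_nonneg u) (hs' i (mem_of_mem_erase hi))) _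

end PowGramForm

theorem rpow_add_one_sub_rpow_le {m A B : ℝ} (hm : 1 ≤ m) (hB : 0 ≤ B) (hBA : B ≤ A)
    (hAB : A ≤ 1 - B) : A ^ m + (1 - A) ^ m ≤ B ^ m + (1 - B) ^ m := by
  obtain hAB' | hAB' := eq_or_lt_of_le (hBA.trans hAB)
  · rw [show A = B by linarith]
  have hd : 0 < 1 - 2 * B := by linarith
  set θ := (1 - B - A) / (1 - 2 * B)
  have hθ0 : 0 ≤ θ := div_nonneg (by linarith) hd.le
  have hθ1 : θ ≤ 1 := (div_le_one hd).2 (by linarith)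
  have hθ : θ * (1 - 2 * B) = 1 - B - A := div_mul_cancel₀ _ hd.ne'
  have hjensen :=
    (convexOn_rpow hm).2 (Set.mem_Ici.2 hB) (Set.mem_Ici.2 (by linarith : 0 ≤ 1 - B))
  have h₁ := hjensen hθ0 (sub_nonneg.2 hθ1) (add_sub_cancel θ 1)
  have h₂ := hjensen (sub_nonneg.2 hθ1) hθ0 (sub_add_cancel 1 θ)
  simp only [smul_eq_mul] at h₁ h₂
  rw [show θ * B + (1 - θ) * (1 - B) = A by linear_combination -hθ] at h₁
  rw [show (1 - θ) * B + θ * (1 - B) = 1 - A by linear_combination hθ] at h₂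
  linarith

section UnitCircle

/- Here `(x, x')` and `(y, y')` are the unit vectors at angles `α ≤ β` in `[0, π/2]`. -/

variable {k x x' y y' : ℝ}

theorem sq_rpow_div_two (hx : 0 ≤ x) (k : ℝ) : (x ^ 2) ^ (k / 2) = x ^ k := by
  rw [← rpow_natCast_mul hx]
  ring_nf

theorem sq_sub_rpow_le_of_angle_sum_ge (hk : 2 ≤ k) (hx' : 0 ≤ x') (hy : 0 ≤ y) (hy' : 0 ≤ y')
    (hxx : x ^ 2 + x' ^ 2 = 1) (hyy : y ^ 2 + y' ^ 2 = 1) (hyx : y ≤ x) (hyx' : y ≤ x') :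
    (x ^ k - y ^ k) ^ 2 ≤ 1 - (x * y + x' * y') ^ k := by
  have hx : 0 ≤ x := hy.trans hyx
  have hgram :
      (x ^ k - y ^ k) ^ 2 + (y' ^ k - x' ^ k) ^ 2 ≤ 2 * (1 - (x * y + x' * y') ^ k) := by
    have h := powGramForm_nonneg 2 (by exact_mod_cast hk) (S := univ) (by simp)
      (c := ![1, x, y, 0]) (s := ![0, x', y', 1]) (by simp [Fin.forall_fin_succ, hx, hy])
      (by simp [Fin.forall_fin_succ, hx', hy']) ![-(x ^ k - y ^ k), 1, -1, y' ^ k - x' ^ k]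
    simp only [powGramForm, Fin.sum_univ_four, Matrix.cons_val] at h
    rw [show x * x + x' * x' = 1 by linear_combination hxx,
      show y * y + y' * y' = 1 by linear_combination hyy,
      show y * x + y' * x' = x * y + x' * y' by ring] at h
    simp only [mul_one, one_mul, mul_zero, zero_mul, add_zero, zero_add, one_rpow,
      zero_rpow (by linarith : k ≠ 0)] at h
    linear_combination h
  have hmono : x ^ k + x' ^ k ≤ y ^ k + y' ^ k := by
    have h := rpow_add_one_sub_rpow_le (m := k / 2) (A := x ^ 2) (B := y ^ 2) (by linarith)
      (sq_nonneg y) (pow_le_pow_left₀ hy hyx 2) (by nlinarith)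
    rwa [show 1 - x ^ 2 = x' ^ 2 by linarith, show 1 - y ^ 2 = y' ^ 2 by linarith,
      sq_rpow_div_two hx, sq_rpow_div_two hx', sq_rpow_div_two hy, sq_rpow_div_two hy'] at h
  have hD : 0 ≤ x ^ k - y ^ k := sub_nonneg.2 (rpow_le_rpow hy hyx (by linarith))
  nlinarith

theorem sq_sub_rpow_le_of_angle_sum_le (hk : 2 ≤ k) (hx' : 0 ≤ x') (hy : 0 ≤ y) (hy' : 0 ≤ y')
    (hxx : x ^ 2 + x' ^ 2 = 1) (hyy : y ^ 2 + y' ^ 2 = 1) (hyx : y ≤ x) (hxy' : x' ≤ y) :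
    (x ^ k - y ^ k) ^ 2 ≤ 1 - (x * y + x' * y') ^ k := by
  have hx : 0 ≤ x := hy.trans hyx
  have hk0 : 0 ≤ k := by linarith
  set C := x * y + x' * y'
  -- `(e, f)` is the unit vector at angle `α + β`.
  set e := x * y - x' * y'
  set f := x' * y + x * y'
  have hyx' : y' ≤ x := by nlinarith
  have he : 0 ≤ e := sub_nonneg.2 (mul_le_mul hyx' hxy' hx' hx |>.trans_eq' (mul_comm _ _))
  have hf : 0 ≤ f := by positivity
  have hquad :
      ∀ t, 0 ≤ (2 - 2 * e ^ k) * (t * t) + 4 * (x ^ k - y ^ k) * t + (2 - 2 * C ^ k) := by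
    intro t
    have h := powGramForm_nonneg 2 (by exact_mod_cast hk) (S := univ) (by simp)
      (c := ![1, x, y, e]) (s := ![0, x', y', f]) (by simp [Fin.forall_fin_succ, hx, hy, he])
      (by simp [Fin.forall_fin_succ, hx', hy', hf]) ![t, 1, -1, -t]
    simp only [powGramForm, Fin.sum_univ_four, Matrix.cons_val] at h
    rw [show x * x + x' * x' = 1 by linear_combination hxx,
      show y * y + y' * y' = 1 by linear_combination hyy,
      show e * e + f * f = 1 by linear_combination (y ^ 2 + y' ^ 2) * hxx + hyy,
      show x * e + x' * f = y by linear_combination y * hxx,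
      show e * x + f * x' = y by linear_combination y * hxx,
      show y * e + y' * f = x by linear_combination x * hyy,
      show e * y + f * y' = x by linear_combination x * hyy,
      show y * x + y' * x' = C by ring] at h
    simp only [mul_one, one_mul, mul_zero, zero_mul, add_zero, one_rpow] at h
    linear_combination h
  have hdisc := discrim_le_zero hquad
  rw [discrim] at hdisc
  have hC : C ^ k ≤ 1 := rpow_le_one (by positivity)
    (by nlinarith [sq_nonneg (x * y' - x' * y)]) hk0
  nlinarith [rpow_nonneg he k]

end UnitCircle

theorem abs_sub_rpow_le_sqrt {k x y z : ℝ} (hk : 2 ≤ k) (hx : 0 ≤ x) (hy : 0 ≤ y) (hx1 : x ≤ 1)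
    (hy1 : y ≤ 1) (hz : 0 ≤ z) (hdet : (z - x * y) ^ 2 ≤ (1 - x ^ 2) * (1 - y ^ 2)) :
    |x ^ k - y ^ k| ≤ √(1 - z ^ k) := by
  wlog hyx : y ≤ x generalizing x y
  · rw [abs_sub_comm]
    exact this hy hx hy1 hx1 (by linarith [mul_comm x y]) (le_of_not_ge hyx)
  set x' := √(1 - x ^ 2)
  set y' := √(1 - y ^ 2)
  have hxx : x ^ 2 + x' ^ 2 = 1 := by rw [sq_sqrt (by nlinarith)]; ring
  have hyy : y ^ 2 + y' ^ 2 = 1 := by rw [sq_sqrt (by nlinarith)]; ring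
  have hzC : z ≤ x * y + x' * y' := by
    have h : (z - x * y) ^ 2 ≤ (x' * y') ^ 2 := by
      rwa [mul_pow, sq_sqrt (by nlinarith), sq_sqrt (by nlinarith)]
    linarith [(abs_le_of_sq_le_sq' h (by positivity)).2]
  have hcircle : (x ^ k - y ^ k) ^ 2 ≤ 1 - (x * y + x' * y') ^ k := by
    rcases le_total y x' with h | h
    · exact sq_sub_rpow_le_of_angle_sum_ge hk (sqrt_nonneg _) hy (sqrt_nonneg _) hxx hyy hyx h
    · exact sq_sub_rpow_le_of_angle_sum_le hk (sqrt_nonneg _) hy (sqrt_nonneg _) hxx hyy hyx h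
  refine abs_le_sqrt (hcircle.trans ?_)
  gcongr

theorem sq_le_one_of_posSemidef {a b c : ℝ}
    (hB : Matrix.PosSemidef !![1, a, b; a, 1, c; b, c, 1]) :
    a ^ 2 ≤ 1 ∧ b ^ 2 ≤ 1 ∧ c ^ 2 ≤ 1 := by
  have ha := hB.dotProduct_mulVec_nonneg ![a, -1, 0]
  have hb := hB.dotProduct_mulVec_nonneg ![b, 0, -1]
  have hc := hB.dotProduct_mulVec_nonneg ![0, c, -1]
  simp only [dotProduct, Matrix.mulVec, Fin.sum_univ_three, Matrix.of_apply, Matrix.cons_val',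
    Matrix.cons_val_fin_one, Matrix.cons_val, Pi.star_apply, star_trivial] at ha hb hc
  exact ⟨by linarith, by linarith, by linarith⟩

theorem sq_sub_mul_le_of_posSemidef {a b c : ℝ}
    (hB : Matrix.PosSemidef !![1, a, b; a, 1, c; b, c, 1]) :
    (c - a * b) ^ 2 ≤ (1 - a ^ 2) * (1 - b ^ 2) := by
  have h := hB.det_nonneg
  rw [Matrix.det_fin_three] at h
  simp only [Matrix.of_apply, Matrix.cons_val', Matrix.cons_val_fin_one, Matrix.cons_val] at h
  linarith

theorem stmt12 (a b c : ℝ)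
    (hB : Matrix.PosSemidef !![1, a, b; a, 1, c; b, c, 1]) :
    (|(|a| - |b|)| ≤ Real.sqrt (1 - |c| ^ 2) ∧
      Real.sqrt (1 - |c| ^ 2) ≤ Real.sqrt 2 * Real.sqrt (1 - |c|)) ∧
    ∀ k : ℝ, 2 ≤ k → |(|a| ^ k - |b| ^ k)| ≤ Real.sqrt (1 - |c| ^ k) := by
  obtain ⟨ha, hb, hc⟩ := sq_le_one_of_posSemidef hB
  have hdet : (|c| - |a| * |b|) ^ 2 ≤ (1 - |a| ^ 2) * (1 - |b| ^ 2) := by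
    have hsign : a * b * c ≤ |a| * |b| * |c| := by
      rw [← abs_mul, ← abs_mul]
      exact le_abs_self _
    have := sq_sub_mul_le_of_posSemidef hB
    simp only [sub_sq, mul_pow, sq_abs]
    nlinarith
  rw [sq_le_one_iff_abs_le_one] at ha hb hc
  have hab := mul_nonneg (abs_nonneg a) (abs_nonneg b)
  refine ⟨⟨abs_le_sqrt ?_, ?_⟩, fun k hk => abs_sub_rpow_le_sqrt hk (abs_nonneg a)
    (abs_nonneg b) ha hb (abs_nonneg c) hdet⟩
  · nlinarith [mul_nonneg hab (sub_nonneg.2 hc)]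
  · rw [← sqrt_mul zero_le_two]
    exact sqrt_le_sqrt (by nlinarith [abs_nonneg c])
end

section
/- Let α, β, γ be real numbers with 0 ≤ α, β, γ ≤ π/2 and |α − β| ≤ γ ≤ α + β. Then for every positive integer k, |cos^k α − cos^k β| ≤ √k · sin γ. -/
/-! With `u = (cos α, sin α)`, `v = (cos β, sin β)` and `e = (1, 0)`, the `k`-th tensor powers
satisfy `⟪u^⊗k, e^⊗k⟫ = cos^k α`, `⟪v^⊗k, e^⊗k⟫ = cos^k β` and `⟪u^⊗k, v^⊗k⟫ = cos^k (α - β)`, so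
Cauchy–Schwarz gives `(cos^k α - cos^k β)² ≤ ‖u^⊗k - v^⊗k‖² = 2 - 2 cos^k (α - β)`. For `c ∈ [0, 1]`
and `k ≠ 1`, `2 (1 - c^k) ≤ k (1 - c²)`, which bounds this by `k sin² (α - β)`. The case `k = 1`
follows from `(cos α - cos β)² + 2 cos α cos β (1 - cos (α - β)) = sin² (α - β)`. Finally
`sin |α - β| ≤ sin γ` because `|α - β| ≤ γ ≤ π / 2`. -/

open Real Matrix

section TensorPower

variable {ι R : Type*} [Fintype ι] [CommSemiring R]

def tensorPow (u : ι → R) (k : ℕ) : (Fin k → ι) → R := fun p => ∏ j, u (p j)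

theorem tensorPow_dotProduct_tensorPow (u v : ι → R) (k : ℕ) :
    tensorPow u k ⬝ᵥ tensorPow v k = (u ⬝ᵥ v) ^ k := by
  simp only [dotProduct, tensorPow, Fintype.sum_pow, Finset.prod_mul_distrib]

end TensorPower

theorem sq_dotProduct_pow_sub_dotProduct_pow_le {ι R : Type*} [Fintype ι] [CommRing R]
    [LinearOrder R] [IsStrictOrderedRing R] (u v w : ι → R) (k : ℕ) :
    ((u ⬝ᵥ w) ^ k - (v ⬝ᵥ w) ^ k) ^ 2 ≤
      ((u ⬝ᵥ u) ^ k - 2 * (u ⬝ᵥ v) ^ k + (v ⬝ᵥ v) ^ k) * (w ⬝ᵥ w) ^ k := by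
  set U := tensorPow u k
  set V := tensorPow v k
  set W := tensorPow w k
  calc ((u ⬝ᵥ w) ^ k - (v ⬝ᵥ w) ^ k) ^ 2 = ((U - V) ⬝ᵥ W) ^ 2 := by
        simp only [sub_dotProduct, U, V, W, tensorPow_dotProduct_tensorPow]
    _ ≤ ((U - V) ⬝ᵥ (U - V)) * (W ⬝ᵥ W) := by
        simpa only [dotProduct, sq] using Finset.sum_mul_sq_le_sq_mul_sq Finset.univ (U - V) W
    _ = ((u ⬝ᵥ u) ^ k - 2 * (u ⬝ᵥ v) ^ k + (v ⬝ᵥ v) ^ k) * (w ⬝ᵥ w) ^ k := by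
        simp only [sub_dotProduct, dotProduct_sub, dotProduct_comm V U, U, V, W,
          tensorPow_dotProduct_tensorPow]
        ring

theorem two_mul_one_sub_pow_le {R : Type*} [CommRing R] [LinearOrder R] [IsStrictOrderedRing R]
    {c : R} (hc₀ : 0 ≤ c) (hc₁ : c ≤ 1) {k : ℕ} (hk : k ≠ 1) :
    2 * (1 - c ^ k) ≤ k * (1 - c ^ 2) := by
  obtain _ | _ | k := k
  · simp
  · contradiction
  induction k with
  | zero => norm_num
  | succ k ih =>
    have hck : 2 * c ^ (k + 2) ≤ 1 + c := by
      linarith [pow_le_of_le_one hc₀ hc₁ (show k + 2 ≠ 0 by omega)]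
    have := ih (by omega)
    push_cast at this ⊢
    rw [pow_succ]
    nlinarith [mul_le_mul_of_nonneg_right hck (sub_nonneg.2 hc₁)]

theorem abs_cos_sub_cos_le_abs_sin_sub {α β : ℝ} (h : 0 ≤ cos α * cos β) :
    |cos α - cos β| ≤ |sin (α - β)| := by
  have hcos : cos (α - β) ≤ 1 := cos_le_one _
  rw [← sq_le_sq, sin_sub]
  nlinarith [sin_sq_add_cos_sq α, sin_sq_add_cos_sq β, cos_sub α β,
    mul_le_mul_of_nonneg_left hcos h]

theorem abs_cos_pow_sub_cos_pow_le {α β : ℝ} (h : 0 ≤ cos (α - β)) {k : ℕ} (hk : k ≠ 1) :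
    |cos α ^ k - cos β ^ k| ≤ √k * |sin (α - β)| := by
  have hgram := sq_dotProduct_pow_sub_dotProduct_pow_le ![cos α, sin α] ![cos β, sin β] ![1, 0] k
  simp only [dotProduct, Fin.sum_univ_two, Matrix.cons_val_zero, Matrix.cons_val_one,
    Matrix.cons_val_fin_one, mul_one, mul_zero, add_zero, ← sq, cos_sq_add_sin_sq, ← cos_sub,
    one_pow, ne_eq, OfNat.ofNat_ne_zero, not_false_eq_true, zero_pow] at hgram
  refine abs_le_of_sq_le_sq ?_ (by positivity)
  calc (cos α ^ k - cos β ^ k) ^ 2 ≤ 2 * (1 - cos (α - β) ^ k) := by linarith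
    _ ≤ k * (1 - cos (α - β) ^ 2) := two_mul_one_sub_pow_le h (cos_le_one _) hk
    _ = (√k * |sin (α - β)|) ^ 2 := by
        rw [mul_pow, sq_abs, sq_sqrt (Nat.cast_nonneg k), ← sin_sq]

theorem stmt13_general (α β γ : ℝ) (hα : α ∈ Set.Icc 0 (π / 2)) (hβ : β ∈ Set.Icc 0 (π / 2))
    (hγ : γ ∈ Set.Icc 0 (π / 2)) (h1 : |α - β| ≤ γ)
    (k : ℕ) :
    |Real.cos α ^ k - Real.cos β ^ k| ≤ Real.sqrt k * Real.sin γ := by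
  have hαβ : |α - β| ≤ π / 2 := h1.trans hγ.2
  have hsin : |sin (α - β)| ≤ sin γ := by
    rw [abs_sin_eq_sin_abs_of_abs_le_pi (by linarith [pi_pos])]
    exact sin_le_sin_of_le_of_le_pi_div_two (by linarith [abs_nonneg (α - β), pi_pos]) hγ.2 h1
  have hdiff : |cos α ^ k - cos β ^ k| ≤ √k * |sin (α - β)| := by
    obtain rfl | hk := eq_or_ne k 1
    · have hcos (θ : ℝ) (hθ : θ ∈ Set.Icc 0 (π / 2)) : 0 ≤ cos θ :=
        cos_nonneg_of_mem_Icc ⟨by linarith [hθ.1, pi_pos], hθ.2⟩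
      simpa using abs_cos_sub_cos_le_abs_sin_sub (mul_nonneg (hcos α hα) (hcos β hβ))
    · exact abs_cos_pow_sub_cos_pow_le
        (cos_nonneg_of_neg_pi_div_two_le_of_le (abs_le.1 hαβ).1 (abs_le.1 hαβ).2) hk
  exact hdiff.trans (mul_le_mul_of_nonneg_left hsin (sqrt_nonneg _))

theorem stmt13 (α β γ : ℝ) (hα : α ∈ Set.Icc 0 (π / 2)) (hβ : β ∈ Set.Icc 0 (π / 2))
    (hγ : γ ∈ Set.Icc 0 (π / 2)) (h1 : |α - β| ≤ γ) (h2 : γ ≤ α + β)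
    (k : ℕ) (hk : 1 ≤ k) :
    |Real.cos α ^ k - Real.cos β ^ k| ≤ Real.sqrt k * Real.sin γ :=
  stmt13_general α β γ hα hβ hγ h1 k
end

section
/- Let l be a real number and let L = [l, ∞) (respectively L = (l, ∞)). Suppose f is a real-valued function that is nonnegative on L, i.e., f(x) ≥ 0 for all x ∈ L, and mid-point concave on L, i.e., f((x+y)/2) ≥ (f(x)+f(y))/2 for all x, y ∈ L. Then f is monotonically nondecreasing on L: f(x) ≥ f(y) whenever x, y ∈ L and x > y. -/
/-!
If `f y > f x` for some `y < x`, mid-point concavity along the points `y + 2ⁿ (x - y)` doubles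
the drop `f y - f x` at every step, so `f` eventually becomes negative on the ray.
-/

def MidpointConcaveOn (S : Set ℝ) (f : ℝ → ℝ) : Prop :=
  ∀ x ∈ S, ∀ y ∈ S, (f x + f y) / 2 ≤ f ((x + y) / 2)

section

variable {S : Set ℝ} {f : ℝ → ℝ} {x y : ℝ}

lemma IsUpperSet.add_two_pow_mul_sub_mem (hS : IsUpperSet S) (hy : y ∈ S) (hyx : y ≤ x)
    (n : ℕ) : y + 2 ^ n * (x - y) ∈ S :=
  hS (le_add_of_nonneg_right (mul_nonneg (by positivity) (sub_nonneg.2 hyx))) hy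

lemma MidpointConcaveOn.le_sub_two_pow_mul (hf : MidpointConcaveOn S f) (hS : IsUpperSet S)
    (hy : y ∈ S) (hyx : y ≤ x) (n : ℕ) :
    f (y + 2 ^ n * (x - y)) ≤ f y - 2 ^ n * (f y - f x) := by
  induction n with
  | zero => simp
  | succ n ih =>
    have hmid : (y + (y + 2 ^ (n + 1) * (x - y))) / 2 = y + 2 ^ n * (x - y) := by ring
    have h := hf y hy _ (hS.add_two_pow_mul_sub_mem hy hyx (n + 1))
    rw [hmid] at h
    have hdouble : (2 : ℝ) ^ (n + 1) * (f y - f x) = 2 * (2 ^ n * (f y - f x)) := by ring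
    linarith

theorem MidpointConcaveOn.monotoneOn_of_nonneg (hf : MidpointConcaveOn S f)
    (hS : IsUpperSet S) (hnonneg : ∀ x ∈ S, 0 ≤ f x) : MonotoneOn f S := by
  intro y hy x _ hyx
  by_contra! hdrop
  obtain ⟨n, hn⟩ := pow_unbounded_of_one_lt (f y / (f y - f x)) one_lt_two
  have hlarge : f y < 2 ^ n * (f y - f x) := (div_lt_iff₀ (sub_pos.2 hdrop)).1 hn
  have hneg := hf.le_sub_two_pow_mul hS hy hyx n
  linarith [hnonneg _ (hS.add_two_pow_mul_sub_mem hy hyx n)]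

end

theorem stmt15 (l : ℝ) (L : Set ℝ) (hL : L = Set.Ici l ∨ L = Set.Ioi l)
    (f : ℝ → ℝ) (hnonneg : ∀ x ∈ L, 0 ≤ f x)
    (hconc : ∀ x ∈ L, ∀ y ∈ L, (f x + f y) / 2 ≤ f ((x + y) / 2)) :
    ∀ x ∈ L, ∀ y ∈ L, y < x → f y ≤ f x := by
  have hL_upper : IsUpperSet L := by
    rcases hL with rfl | rfl
    exacts [isUpperSet_Ici l, isUpperSet_Ioi l]
  have hmono : MonotoneOn f L := MidpointConcaveOn.monotoneOn_of_nonneg hconc hL_upper hnonneg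
  exact fun x hx y hy hyx => hmono hy hx hyx.le
end

section
/- Let u, v, w be unit vectors in a complex inner product space. Then for every real number k ≥ 2, (1 − |⟨u,v⟩|^k)^{1/k} ≤ (1 − |⟨u,w⟩|^k)^{1/k} + (1 − |⟨w,v⟩|^k)^{1/k}. -/
/-!
Write `α, β, γ` for the Fubini–Study angles `arccos ‖⟪u, w⟫‖`, `arccos ‖⟪w, v⟫‖`, `arccos ‖⟪u, v⟫‖`
and `f θ = (1 - cos θ ^ k) ^ (1 / k)`, so that the claim reads `f γ ≤ f α + f β`.
After multiplying `w` and `v` by unimodular phases, which changes none of the three angles, the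
inner products `⟪u, w⟫` and `⟪w, v⟫` are nonnegative reals, and the triangle inequality for real
angles in the underlying real inner product space gives `γ ≤ α + β`.
On `[0, π / 2]` the function `f` is nondecreasing, and for `k ≥ 2` the ratio `f θ / θ` is
nonincreasing (its derivative has the sign of `θ cos θ ^ (k - 1) sin θ - (1 - cos θ ^ k)`, which is
nonpositive because `θ cos θ ≤ sin θ`), so `f` is subadditive there.
-/

open Real Set

open scoped InnerProductSpace

noncomputable def powChord (k θ : ℝ) : ℝ := (1 - cos θ ^ k) ^ (1 / k)

lemma apply_add_le_of_antitoneOn_div {f : ℝ → ℝ} {L a b : ℝ} (hf0 : 0 ≤ f 0)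
    (hf : AntitoneOn (fun x => f x / x) (Ioc 0 L)) (ha : 0 ≤ a) (hb : 0 ≤ b) (hab : a + b ≤ L) :
    f (a + b) ≤ f a + f b := by
  rcases ha.eq_or_lt with rfl | ha
  · simpa using hf0
  rcases hb.eq_or_lt with rfl | hb
  · simpa using hf0
  have hfa : f (a + b) / (a + b) ≤ f a / a := hf ⟨ha, by linarith⟩ ⟨by linarith, hab⟩ (by linarith)
  have hfb : f (a + b) / (a + b) ≤ f b / b := hf ⟨hb, by linarith⟩ ⟨by linarith, hab⟩ (by linarith)
  calc f (a + b) = a * (f (a + b) / (a + b)) + b * (f (a + b) / (a + b)) := by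
        field_simp
    _ ≤ a * (f a / a) + b * (f b / b) := by gcongr
    _ = f a + f b := by field_simp

section PowChord

variable {k : ℝ}

lemma one_sub_cos_rpow_nonneg {θ : ℝ} (hk : 0 ≤ k) (h0 : 0 ≤ θ) (h1 : θ ≤ π / 2) :
    0 ≤ 1 - cos θ ^ k :=
  sub_nonneg.2 <| rpow_le_one (cos_nonneg_of_mem_Icc ⟨by linarith, h1⟩) (cos_le_one θ) hk

lemma mul_cos_rpow_sub_one_mul_sin_le {θ : ℝ} (hk : 2 ≤ k) (h0 : 0 < θ) (h1 : θ < π / 2) :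
    θ * (cos θ ^ (k - 1) * sin θ) ≤ 1 - cos θ ^ k := by
  have hcos : 0 < cos θ := cos_pos_of_mem_Ioo ⟨by linarith, h1⟩
  have hsin : 0 < sin θ := sin_pos_of_pos_of_lt_pi h0 (by linarith)
  have htan : θ * cos θ ≤ sin θ :=
    (le_div_iff₀ hcos).mp (tan_eq_sin_div_cos θ ▸ (lt_tan h0 h1).le)
  have hk1 : cos θ ^ (k - 1) = cos θ ^ (k - 2) * cos θ := by
    rw [← rpow_add_one hcos.ne']; ring_nf
  have hk2 : cos θ ^ k = cos θ ^ (k - 2) * cos θ ^ 2 := by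
    rw [← rpow_natCast, ← rpow_add hcos]; norm_num
  calc θ * (cos θ ^ (k - 1) * sin θ) = cos θ ^ (k - 2) * (θ * cos θ) * sin θ := by
        rw [hk1]; ring
    _ ≤ cos θ ^ (k - 2) * sin θ * sin θ := by gcongr
    _ = cos θ ^ (k - 2) - cos θ ^ k := by rw [hk2, mul_assoc, ← sq, sin_sq]; ring
    _ ≤ 1 - cos θ ^ k := by gcongr; exact rpow_le_one hcos.le (cos_le_one θ) (by linarith)

lemma hasDerivAt_one_sub_cos_rpow_div_rpow {x : ℝ} (h0 : 0 < x) (h1 : x < π / 2) :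
    HasDerivAt (fun θ => (1 - cos θ ^ k) / θ ^ k)
      (k * x ^ (k - 1) * (x * (cos x ^ (k - 1) * sin x) - (1 - cos x ^ k)) / (x ^ k) ^ 2) x := by
  have hcos : 0 < cos x := cos_pos_of_mem_Ioo ⟨by linarith, h1⟩
  have hnum : HasDerivAt (fun θ => 1 - cos θ ^ k) (-(k * cos x ^ (k - 1) * -sin x)) x :=
    ((hasDerivAt_rpow_const (Or.inl hcos.ne')).comp x (hasDerivAt_cos x)).const_sub 1
  have hxk : x ^ k = x ^ (k - 1) * x := by rw [← rpow_add_one h0.ne', sub_add_cancel]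
  refine (hnum.div (hasDerivAt_rpow_const (Or.inl h0.ne')) (rpow_pos_of_pos h0 k).ne').congr_deriv
    ?_
  rw [hxk]
  ring

lemma antitoneOn_one_sub_cos_rpow_div_rpow (hk : 2 ≤ k) :
    AntitoneOn (fun θ => (1 - cos θ ^ k) / θ ^ k) (Ioc 0 (π / 2)) := by
  have hk0 : 0 ≤ k := by linarith
  refine antitoneOn_of_hasDerivWithinAt_nonpos (convex_Ioc 0 (π / 2))
    (f' := fun x =>
      k * x ^ (k - 1) * (x * (cos x ^ (k - 1) * sin x) - (1 - cos x ^ k)) / (x ^ k) ^ 2)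
    ?_ (fun x hx => ?_) (fun x hx => ?_)
  · have hcos := continuous_cos.continuousOn.rpow_const (s := Ioc 0 (π / 2)) fun _ _ => Or.inr hk0
    exact (continuousOn_const.sub hcos).div (continuousOn_id.rpow_const fun _ _ => Or.inr hk0)
      fun x hx => (rpow_pos_of_pos hx.1 k).ne'
  · rw [interior_Ioc] at hx ⊢
    exact (hasDerivAt_one_sub_cos_rpow_div_rpow hx.1 hx.2).hasDerivWithinAt
  · rw [interior_Ioc] at hx
    have hkx : 0 ≤ k * x ^ (k - 1) := mul_nonneg hk0 (rpow_nonneg hx.1.le _)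
    have := mul_cos_rpow_sub_one_mul_sin_le hk hx.1 hx.2
    exact div_nonpos_of_nonpos_of_nonneg (mul_nonpos_of_nonneg_of_nonpos hkx (by linarith))
      (sq_nonneg _)

lemma antitoneOn_powChord_div (hk : 2 ≤ k) :
    AntitoneOn (fun θ => powChord k θ / θ) (Ioc 0 (π / 2)) := by
  have hk0 : 0 < k := by linarith
  have hratio : ∀ θ ∈ Ioc 0 (π / 2), powChord k θ / θ = ((1 - cos θ ^ k) / θ ^ k) ^ (1 / k) :=
    fun θ hθ => by
      rw [div_rpow (one_sub_cos_rpow_nonneg hk0.le hθ.1.le hθ.2) (rpow_nonneg hθ.1.le k),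
        one_div, rpow_rpow_inv hθ.1.le hk0.ne', powChord, one_div]
  intro a ha b hb hab
  simp only [hratio a ha, hratio b hb]
  exact rpow_le_rpow (div_nonneg (one_sub_cos_rpow_nonneg hk0.le hb.1.le hb.2)
    (rpow_nonneg hb.1.le k)) (antitoneOn_one_sub_cos_rpow_div_rpow hk ha hb hab) (by positivity)

lemma monotoneOn_powChord (hk : 0 < k) : MonotoneOn (powChord k) (Icc 0 (π / 2)) := by
  intro a ha b hb hab
  have hcos : cos b ≤ cos a := cos_le_cos_of_nonneg_of_le_pi ha.1 (by linarith [hb.2, pi_pos]) hab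
  have hcosk : cos b ^ k ≤ cos a ^ k :=
    rpow_le_rpow (cos_nonneg_of_mem_Icc ⟨by linarith [hb.1, pi_pos], hb.2⟩) hcos hk.le
  exact rpow_le_rpow (one_sub_cos_rpow_nonneg hk.le ha.1 ha.2) (by linarith) (by positivity)

lemma powChord_le_add_of_le_add (hk : 2 ≤ k) {α β γ : ℝ} (hα : α ∈ Icc 0 (π / 2))
    (hβ : β ∈ Icc 0 (π / 2)) (hγ : γ ∈ Icc 0 (π / 2)) (h : γ ≤ α + β) :
    powChord k γ ≤ powChord k α + powChord k β := by
  have hmono := monotoneOn_powChord (show 0 < k by linarith)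
  set t := min (α + β) (π / 2)
  have ht : t ∈ Icc 0 (π / 2) := ⟨le_min (by linarith [hα.1, hβ.1]) (by linarith [pi_pos]),
    min_le_right _ _⟩
  have htα : t - α ∈ Icc 0 (π / 2) :=
    ⟨sub_nonneg.2 (le_min (by linarith [hβ.1]) hα.2), by linarith [ht.2, hα.1]⟩
  calc powChord k γ ≤ powChord k t := hmono hγ ht (le_min h hγ.2)
    _ = powChord k (α + (t - α)) := by rw [add_sub_cancel]
    _ ≤ powChord k α + powChord k (t - α) :=
        apply_add_le_of_antitoneOn_div (rpow_nonneg (by simp) _) (antitoneOn_powChord_div hk)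
          hα.1 htα.1 (by linarith [ht.2])
    _ ≤ powChord k α + powChord k β := by
        gcongr
        exact hmono htα hβ (by linarith [min_le_left (α + β) (π / 2)])

end PowChord

section ProjAngle

variable {V : Type*} [NormedAddCommGroup V] [InnerProductSpace ℂ V]

-- The Fubini–Study distance between the complex lines through `u` and `v`.
noncomputable def projAngle (u v : V) : ℝ :=
  arccos (‖⟪u, v⟫_ℂ‖ / (‖u‖ * ‖v‖))

lemma projAngle_mem_Icc (u v : V) : projAngle u v ∈ Icc 0 (π / 2) :=
  ⟨arccos_nonneg _, arccos_le_pi_div_two.2 (by positivity)⟩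

lemma projAngle_smul_left {c : ℂ} (hc : ‖c‖ = 1) (u v : V) :
    projAngle (c • u) v = projAngle u v := by
  simp only [projAngle, inner_smul_left, norm_mul, Complex.norm_conj, norm_smul, hc, one_mul]

lemma projAngle_smul_right {c : ℂ} (hc : ‖c‖ = 1) (u v : V) :
    projAngle u (c • v) = projAngle u v := by
  simp only [projAngle, inner_smul_right, norm_mul, norm_smul, hc, one_mul]

lemma projAngle_le_arccos_re (u v : V) :
    projAngle u v ≤ arccos (RCLike.re ⟪u, v⟫_ℂ / (‖u‖ * ‖v‖)) :=
  arccos_le_arccos <| div_le_div_of_nonneg_right (RCLike.re_le_norm _) (by positivity)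

lemma exists_smul_arccos_re_eq_projAngle (u v : V) :
    ∃ c : ℂ, ‖c‖ = 1 ∧ arccos (RCLike.re ⟪u, c • v⟫_ℂ / (‖u‖ * ‖c • v‖)) = projAngle u v := by
  set z := ⟪u, v⟫_ℂ
  refine ⟨Complex.exp (↑(-z.arg) * Complex.I), Complex.norm_exp_ofReal_mul_I _, ?_⟩
  have hphase : ⟪u, Complex.exp (↑(-z.arg) * Complex.I) • v⟫_ℂ = ‖z‖ :=
    calc _ = Complex.exp (↑(-z.arg) * Complex.I) * (‖z‖ * Complex.exp (z.arg * Complex.I)) := by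
          rw [inner_smul_right, Complex.norm_mul_exp_arg_mul_I]
      _ = ‖z‖ := by rw [mul_left_comm, ← Complex.exp_add]; simp
  rw [← projAngle_smul_right (Complex.norm_exp_ofReal_mul_I (-z.arg)) u v]
  simp only [projAngle, hphase, RCLike.re_to_complex, Complex.ofReal_re, Complex.norm_real,
    norm_norm]

lemma projAngle_le_projAngle_add_projAngle (u v w : V) :
    projAngle u v ≤ projAngle u w + projAngle w v := by
  let _ := InnerProductSpace.rclikeToReal ℂ V
  obtain ⟨c, hc, huw⟩ := exists_smul_arccos_re_eq_projAngle u w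
  obtain ⟨d, hd, hwv⟩ := exists_smul_arccos_re_eq_projAngle (c • w) v
  have htri := InnerProductGeometry.angle_le_angle_add_angle u (c • w) (d • v)
  simp only [InnerProductGeometry.angle, real_inner_eq_re_inner] at htri
  calc projAngle u v = projAngle u (d • v) := (projAngle_smul_right hd u v).symm
    _ ≤ arccos (RCLike.re ⟪u, d • v⟫_ℂ / (‖u‖ * ‖d • v‖)) := projAngle_le_arccos_re u _
    _ ≤ _ := htri
    _ = projAngle u w + projAngle w v := by rw [huw, hwv, projAngle_smul_left hc]

lemma powChord_projAngle {u v : V} (hu : ‖u‖ = 1) (hv : ‖v‖ = 1) (k : ℝ) :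
    powChord k (projAngle u v) = (1 - ‖⟪u, v⟫_ℂ‖ ^ k) ^ (1 / k) := by
  have hle : ‖⟪u, v⟫_ℂ‖ ≤ 1 := by simpa [hu, hv] using norm_inner_le_norm (𝕜 := ℂ) u v
  rw [projAngle, hu, hv, mul_one, div_one, powChord,
    cos_arccos (by linarith [norm_nonneg ⟪u, v⟫_ℂ]) hle]

end ProjAngle

theorem stmt17 {V : Type*} [NormedAddCommGroup V] [InnerProductSpace ℂ V]
    (u v w : V) (hu : ‖u‖ = 1) (hv : ‖v‖ = 1) (hw : ‖w‖ = 1)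
    (k : ℝ) (hk : 2 ≤ k) :
    (1 - ‖(inner ℂ u v : ℂ)‖ ^ k) ^ (1 / k) ≤
      (1 - ‖(inner ℂ u w : ℂ)‖ ^ k) ^ (1 / k) +
      (1 - ‖(inner ℂ w v : ℂ)‖ ^ k) ^ (1 / k) := by
  have h := powChord_le_add_of_le_add hk (projAngle_mem_Icc u w) (projAngle_mem_Icc w v)
    (projAngle_mem_Icc u v) (projAngle_le_projAngle_add_projAngle u v w)
  rwa [powChord_projAngle hu hv, powChord_projAngle hu hw, powChord_projAngle hw hv] at h
end

section
/- Let u, v, w be unit vectors in a complex inner product space. Then | |⟨u,v⟩| − |⟨v,w⟩| | ≤ √(1 − |⟨w,u⟩|²); in particular, |⟨u,v⟩| ≤ |⟨v,w⟩| + √(1 − |⟨w,u⟩|²), i.e., with α = arccos|⟨u,v⟩|, β = arccos|⟨v,w⟩|, γ = arccos|⟨w,u⟩|, one has cos α ≤ cos β + sin γ. -/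
/-!
Split `u = ⟪w, u⟫ w + u'` with `u' ⟂ w`, so that `‖u'‖ = √(1 - |⟪w, u⟫|²)`. Then
`⟪u, v⟫ = conj ⟪w, u⟫ ⟪w, v⟫ + ⟪u', v⟫`, and Cauchy–Schwarz on the second term gives
`|⟪u, v⟫| ≤ |⟪w, u⟫| |⟪w, v⟫| + √(1 - |⟪w, u⟫|²) ≤ |⟪v, w⟫| + √(1 - |⟪w, u⟫|²)`.
The same argument with the roles of `u` and `w` exchanged bounds `|⟪v, w⟫|`.
-/

open Real

open scoped InnerProductSpace

section

variable {𝕜 E : Type*} [RCLike 𝕜] [NormedAddCommGroup E] [InnerProductSpace 𝕜 E]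

theorem norm_sub_inner_smul_sq_of_norm_eq_one {z : E} (hz : ‖z‖ = 1) (x : E) :
    ‖x - ⟪z, x⟫_𝕜 • z‖ ^ 2 = ‖x‖ ^ 2 - ‖⟪z, x⟫_𝕜‖ ^ 2 := by
  rw [@norm_sub_sq 𝕜, inner_smul_right, ← inner_conj_symm, RCLike.conj_mul, norm_smul, hz]
  norm_cast
  rw [RCLike.norm_conj]
  ring

theorem norm_inner_le_mul_add_of_norm_eq_one {z : E} (hz : ‖z‖ = 1) (x y : E) :
    ‖⟪x, y⟫_𝕜‖ ≤ ‖⟪z, x⟫_𝕜‖ * ‖⟪z, y⟫_𝕜‖ + √(‖x‖ ^ 2 - ‖⟪z, x⟫_𝕜‖ ^ 2) * ‖y‖ := by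
  have hsplit : ⟪x, y⟫_𝕜 = ⟪⟪z, x⟫_𝕜 • z, y⟫_𝕜 + ⟪x - ⟪z, x⟫_𝕜 • z, y⟫_𝕜 := by
    rw [← inner_add_left, add_sub_cancel]
  calc ‖⟪x, y⟫_𝕜‖ ≤ ‖⟪⟪z, x⟫_𝕜 • z, y⟫_𝕜‖ + ‖⟪x - ⟪z, x⟫_𝕜 • z, y⟫_𝕜‖ :=
        hsplit ▸ norm_add_le _ _
    _ ≤ ‖⟪z, x⟫_𝕜‖ * ‖⟪z, y⟫_𝕜‖ + ‖x - ⟪z, x⟫_𝕜 • z‖ * ‖y‖ := by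
      rw [inner_smul_left, norm_mul, RCLike.norm_conj]
      gcongr
      exact norm_inner_le_norm _ _
    _ = ‖⟪z, x⟫_𝕜‖ * ‖⟪z, y⟫_𝕜‖ + √(‖x‖ ^ 2 - ‖⟪z, x⟫_𝕜‖ ^ 2) * ‖y‖ := by
      rw [← norm_sub_inner_smul_sq_of_norm_eq_one hz, sqrt_sq (norm_nonneg _)]

theorem norm_inner_le_one_of_norm_eq_one {x y : E} (hx : ‖x‖ = 1) (hy : ‖y‖ = 1) :
    ‖⟪x, y⟫_𝕜‖ ≤ 1 := by
  simpa [hx, hy] using norm_inner_le_norm (𝕜 := 𝕜) x y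

theorem norm_inner_le_norm_inner_add_sqrt {x y z : E} (hx : ‖x‖ = 1) (hy : ‖y‖ = 1)
    (hz : ‖z‖ = 1) : ‖⟪x, y⟫_𝕜‖ ≤ ‖⟪z, y⟫_𝕜‖ + √(1 - ‖⟪z, x⟫_𝕜‖ ^ 2) := by
  have hsplit := norm_inner_le_mul_add_of_norm_eq_one (𝕜 := 𝕜) hz x y
  rw [hx, hy, one_pow, mul_one] at hsplit
  have hprod : ‖⟪z, x⟫_𝕜‖ * ‖⟪z, y⟫_𝕜‖ ≤ ‖⟪z, y⟫_𝕜‖ :=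
    mul_le_of_le_one_left (norm_nonneg _) (norm_inner_le_one_of_norm_eq_one hz hx)
  linarith

end

theorem stmt18 {V : Type*} [NormedAddCommGroup V] [InnerProductSpace ℂ V]
    (u v w : V) (hu : ‖u‖ = 1) (hv : ‖v‖ = 1) (hw : ‖w‖ = 1) :
    |‖(inner ℂ u v : ℂ)‖ - ‖(inner ℂ v w : ℂ)‖| ≤
        Real.sqrt (1 - ‖(inner ℂ w u : ℂ)‖ ^ 2) ∧
      ‖(inner ℂ u v : ℂ)‖ ≤
        ‖(inner ℂ v w : ℂ)‖ + Real.sqrt (1 - ‖(inner ℂ w u : ℂ)‖ ^ 2) ∧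
      Real.cos (Real.arccos (‖(inner ℂ u v : ℂ)‖)) ≤
        Real.cos (Real.arccos (‖(inner ℂ v w : ℂ)‖)) +
          Real.sin (Real.arccos (‖(inner ℂ w u : ℂ)‖)) := by
  have h₁ : ‖⟪u, v⟫_ℂ‖ ≤ ‖⟪v, w⟫_ℂ‖ + √(1 - ‖⟪w, u⟫_ℂ‖ ^ 2) := by
    simpa only [norm_inner_symm w v] using norm_inner_le_norm_inner_add_sqrt hu hv hw
  have h₂ : ‖⟪v, w⟫_ℂ‖ ≤ ‖⟪u, v⟫_ℂ‖ + √(1 - ‖⟪w, u⟫_ℂ‖ ^ 2) := by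
    simpa only [norm_inner_symm w v, norm_inner_symm u w] using
      norm_inner_le_norm_inner_add_sqrt hw hv hu
  refine ⟨abs_sub_le_iff.mpr ⟨by linarith, by linarith⟩, h₁, ?_⟩
  rwa [cos_arccos (by linarith [norm_nonneg ⟪u, v⟫_ℂ]) (norm_inner_le_one_of_norm_eq_one hu hv),
    cos_arccos (by linarith [norm_nonneg ⟪v, w⟫_ℂ]) (norm_inner_le_one_of_norm_eq_one hv hw),
    sin_arccos]
end

section
/- Let u, v, w be unit vectors in a complex inner product space. Then 1 + 2·|⟨u,v⟩|·|⟨v,w⟩|·|⟨w,u⟩| ≥ |⟨u,v⟩|² + |⟨v,w⟩|² + |⟨w,u⟩|². -/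
/-! Apply Cauchy–Schwarz to the components of `u` and `w` orthogonal to `v`: their inner product
is `⟪w, u⟫ - ⟪w, v⟫⟪v, u⟫` and their squared norms are `1 - |⟪v, w⟫|²` and `1 - |⟪v, u⟫|²`, so with
`a, b, c` the three moduli, `(c - ab)² ≤ (1 - a²)(1 - b²)`, which expands to the claim. -/

open Real

open scoped InnerProductSpace

section ProjectionOffUnitVector

variable {𝕜 E : Type*} [RCLike 𝕜] [NormedAddCommGroup E] [InnerProductSpace 𝕜 E]

theorem norm_sub_inner_smul_sq_of_norm_eq_one_s19 {v : E} (hv : ‖v‖ = 1) (u : E) :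
    ‖u - ⟪v, u⟫_𝕜 • v‖ ^ 2 = ‖u‖ ^ 2 - ‖⟪v, u⟫_𝕜‖ ^ 2 := by
  have hcross : ⟪u, ⟪v, u⟫_𝕜 • v⟫_𝕜 = (‖⟪v, u⟫_𝕜‖ : 𝕜) ^ 2 := by
    rw [inner_smul_right, ← inner_conj_symm, RCLike.conj_mul, RCLike.norm_conj]
  rw [@norm_sub_sq 𝕜, hcross, norm_smul, hv]
  simp only [← RCLike.ofReal_pow, RCLike.ofReal_re]
  ring

theorem inner_sub_inner_smul_of_norm_eq_one {v : E} (hv : ‖v‖ = 1) (u w : E) :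
    ⟪w - ⟪v, w⟫_𝕜 • v, u - ⟪v, u⟫_𝕜 • v⟫_𝕜 = ⟪w, u⟫_𝕜 - ⟪w, v⟫_𝕜 * ⟪v, u⟫_𝕜 := by
  have hvv : ⟪v, v⟫_𝕜 = 1 := by simp [inner_self_eq_norm_sq_to_K, hv]
  simp only [inner_sub_left, inner_sub_right, inner_smul_left, inner_smul_right, hvv,
    inner_conj_symm]
  ring

theorem sq_norm_inner_sub_mul_le_of_norm_eq_one {v : E} (hv : ‖v‖ = 1) (u w : E) :
    (‖⟪w, u⟫_𝕜‖ - ‖⟪v, w⟫_𝕜‖ * ‖⟪v, u⟫_𝕜‖) ^ 2 ≤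
      (‖w‖ ^ 2 - ‖⟪v, w⟫_𝕜‖ ^ 2) * (‖u‖ ^ 2 - ‖⟪v, u⟫_𝕜‖ ^ 2) := by
  have hnorm : ‖⟪w, v⟫_𝕜 * ⟪v, u⟫_𝕜‖ = ‖⟪v, w⟫_𝕜‖ * ‖⟪v, u⟫_𝕜‖ := by
    rw [norm_mul, norm_inner_symm]
  have hle : |‖⟪w, u⟫_𝕜‖ - ‖⟪v, w⟫_𝕜‖ * ‖⟪v, u⟫_𝕜‖| ≤
      ‖w - ⟪v, w⟫_𝕜 • v‖ * ‖u - ⟪v, u⟫_𝕜 • v‖ := by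
    calc |‖⟪w, u⟫_𝕜‖ - ‖⟪v, w⟫_𝕜‖ * ‖⟪v, u⟫_𝕜‖|
        ≤ ‖⟪w, u⟫_𝕜 - ⟪w, v⟫_𝕜 * ⟪v, u⟫_𝕜‖ := hnorm ▸ abs_norm_sub_norm_le _ _
      _ = ‖⟪w - ⟪v, w⟫_𝕜 • v, u - ⟪v, u⟫_𝕜 • v⟫_𝕜‖ := by
        rw [inner_sub_inner_smul_of_norm_eq_one hv]
      _ ≤ _ := norm_inner_le_norm _ _
  calc _ = |‖⟪w, u⟫_𝕜‖ - ‖⟪v, w⟫_𝕜‖ * ‖⟪v, u⟫_𝕜‖| ^ 2 := (sq_abs _).symm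
    _ ≤ (‖w - ⟪v, w⟫_𝕜 • v‖ * ‖u - ⟪v, u⟫_𝕜 • v‖) ^ 2 := by gcongr
    _ = _ := by
      rw [mul_pow, norm_sub_inner_smul_sq_of_norm_eq_one_s19 hv,
        norm_sub_inner_smul_sq_of_norm_eq_one_s19 hv]

end ProjectionOffUnitVector

theorem stmt19 {V : Type*} [NormedAddCommGroup V] [InnerProductSpace ℂ V]
    (u v w : V) (hu : ‖u‖ = 1) (hv : ‖v‖ = 1) (hw : ‖w‖ = 1) :
    ‖(inner ℂ u v : ℂ)‖ ^ 2 + ‖(inner ℂ v w : ℂ)‖ ^ 2 +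
        ‖(inner ℂ w u : ℂ)‖ ^ 2 ≤
      1 + 2 * ‖(inner ℂ u v : ℂ)‖ * ‖(inner ℂ v w : ℂ)‖ *
        ‖(inner ℂ w u : ℂ)‖ := by
  have h := sq_norm_inner_sub_mul_le_of_norm_eq_one (𝕜 := ℂ) hv u w
  rw [hu, hw, norm_inner_symm v u] at h
  nlinarith [h]
end
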